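/- arXiv:2506.22918 — 7 statements merged into one kernel-verified Lean document; each statement's English description precedes it below -/
import Mathlib

section
/- Let K be a symmetric positive definite n×n matrix, I a nonempty subset of indices, and V the matrix with orthonormal columns obtained by symmetric orthogonalization of the columns K_{:,I}, i.e. V = K_{:,I} ((K^2)_{I,I})^{-1/2}. Then the Nyström approximation satisfies K_{:,I} (K_{I,I})^{-1} K_{I,:} = V (V^T K^{-1} V)^{-1} V^T. -/
open Matrix

/-! With `A = K_{:,s}` and `K` symmetric, `Aᵀ K⁻¹ A = K_{s,s}`, so the Nyström approximation is
`A (Aᵀ K⁻¹ A)⁻¹ Aᵀ`. This expression does not change when `A` is replaced by `A T` for an invertible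
`T`, and `V = A S⁻¹` where `S`, the square root of the positive definite `(K²)_{s,s}`, is invertible. -/

namespace Matrix

variable {m n R : Type*} [Fintype m] [Fintype n] [DecidableEq n] [CommRing R]

theorem mul_inv_transpose_mul_invariant {A : Matrix m n R} (M : Matrix m m R) {T : Matrix n n R}
    (hT : IsUnit T.det) :
    A * T * ((A * T)ᵀ * M * (A * T))⁻¹ * (A * T)ᵀ = A * (Aᵀ * M * A)⁻¹ * Aᵀ := by
  have hTt : IsUnit Tᵀ.det := by rwa [det_transpose]
  have hconj : (A * T)ᵀ * M * (A * T) = Tᵀ * (Aᵀ * M * A) * T := by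
    simp only [transpose_mul, Matrix.mul_assoc]
  calc A * T * ((A * T)ᵀ * M * (A * T))⁻¹ * (A * T)ᵀ
      = A * (T * T⁻¹) * (Aᵀ * M * A)⁻¹ * (Tᵀ⁻¹ * Tᵀ) * Aᵀ := by
        rw [hconj, Matrix.mul_inv_rev, Matrix.mul_inv_rev, transpose_mul]
        simp only [Matrix.mul_assoc]
    _ = A * (Aᵀ * M * A)⁻¹ * Aᵀ := by
        rw [mul_nonsing_inv T hT, nonsing_inv_mul Tᵀ hTt, Matrix.mul_one, Matrix.mul_one]

omit [Fintype m] in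
theorem submatrix_mul_inv_mul_submatrix {l o : Type*} {K : Matrix n n R} (hK : IsUnit K.det)
    (f : l → n) (g : o → n) :
    K.submatrix f id * K⁻¹ * K.submatrix id g = K.submatrix f g := by
  calc K.submatrix f id * K⁻¹ * K.submatrix id g = (K * K⁻¹ * K).submatrix f g := by
        rw [submatrix_mul _ _ f id g Function.bijective_id,
          submatrix_mul _ _ f id id Function.bijective_id, submatrix_id_id]
    _ = K.submatrix f g := by rw [mul_nonsing_inv K hK, Matrix.one_mul]

omit [Fintype m] in
theorem isUnit_unitary_mul_mul_star [StarRing R] {U : Matrix n n R}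
    (hU : U ∈ unitary (Matrix n n R)) {D : Matrix n n R} (hD : IsUnit D) :
    IsUnit (U * D * star U) :=
  ((Unitary.isUnit_coe (U := ⟨U, hU⟩)).mul hD).mul
    (Unitary.isUnit_coe (U := ⟨star U, Unitary.star_mem hU⟩))

end Matrix

theorem nystrom_refactor_identity_general {n : ℕ} (K : Matrix (Fin n) (Fin n) ℝ) (hK : K.PosDef)
    (s : Finset (Fin n))
    (h2 : ((K * K).submatrix (Subtype.val : s → Fin n) (Subtype.val : s → Fin n)).PosDef) :
    letI V : Matrix (Fin n) s ℝ :=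
      K.submatrix id (Subtype.val : s → Fin n) * ((h2.posSemidef.1.eigenvectorUnitary : Matrix s s ℝ) *
        diagonal ((RCLike.ofReal : ℝ → ℝ) ∘ Real.sqrt ∘ h2.posSemidef.1.eigenvalues) *
        (star h2.posSemidef.1.eigenvectorUnitary : Matrix s s ℝ))⁻¹
    K.submatrix id (Subtype.val : s → Fin n) *
        (K.submatrix (Subtype.val : s → Fin n) (Subtype.val : s → Fin n))⁻¹ *
        K.submatrix (Subtype.val : s → Fin n) id =
      V * (Vᵀ * K⁻¹ * V)⁻¹ * Vᵀ := by
  have hKdet : IsUnit K.det := (isUnit_iff_isUnit_det K).mp hK.isUnit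
  have hsqrt : IsUnit (diagonal ((RCLike.ofReal : ℝ → ℝ) ∘ Real.sqrt ∘ h2.1.eigenvalues)) :=
    isUnit_diagonal.mpr <| Pi.isUnit_iff.mpr fun i =>
      (Real.sqrt_pos.mpr (h2.eigenvalues_pos i)).ne'.isUnit
  have hS := isUnit_unitary_mul_mul_star h2.1.eigenvectorUnitary.2 hsqrt
  have hKt : (K.submatrix id (Subtype.val : s → Fin n))ᵀ = K.submatrix Subtype.val id := by
    rw [transpose_submatrix, isHermitian_iff_isSymm.mp hK.1]
  calc _ = K.submatrix id Subtype.val * ((K.submatrix id (Subtype.val : s → Fin n))ᵀ * K⁻¹ *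
          K.submatrix id Subtype.val)⁻¹ * (K.submatrix id (Subtype.val : s → Fin n))ᵀ := by
        rw [hKt, submatrix_mul_inv_mul_submatrix hKdet]
    _ = _ := (mul_inv_transpose_mul_invariant K⁻¹
          (isUnit_nonsing_inv_det _ ((isUnit_iff_isUnit_det _).mp hS))).symm

/-- **Refactoring identity / Lemma `refactor`.**
Let `K` be symmetric positive definite, `s` a nonempty index subset, and
`V := K_{:,s} ((K²)_{s,s})^{-1/2}` the symmetric orthogonalization of the columns `K_{:,s}`.
Then the Nyström approximation satisfies
`K_{:,s} (K_{s,s})⁻¹ K_{s,:} = V (Vᵀ K⁻¹ V)⁻¹ Vᵀ`.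
(The hypothesis `h2`, positive-definiteness of `(K²)_{s,s}`, is a consequence of `K` being
positive definite and is supplied to form the positive-definite square root.) -/
theorem nystrom_refactor_identity {n : ℕ} (K : Matrix (Fin n) (Fin n) ℝ) (hK : K.PosDef)
    (s : Finset (Fin n)) (hs : s.Nonempty)
    (h2 : ((K * K).submatrix (Subtype.val : s → Fin n) (Subtype.val : s → Fin n)).PosDef) :
    letI V : Matrix (Fin n) s ℝ :=
      K.submatrix id (Subtype.val : s → Fin n) * ((h2.posSemidef.1.eigenvectorUnitary : Matrix s s ℝ) *
        diagonal ((RCLike.ofReal : ℝ → ℝ) ∘ Real.sqrt ∘ h2.posSemidef.1.eigenvalues) *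
        (star h2.posSemidef.1.eigenvectorUnitary : Matrix s s ℝ))⁻¹
    K.submatrix id (Subtype.val : s → Fin n) *
        (K.submatrix (Subtype.val : s → Fin n) (Subtype.val : s → Fin n))⁻¹ *
        K.submatrix (Subtype.val : s → Fin n) id =
      V * (Vᵀ * K⁻¹ * V)⁻¹ * Vᵀ :=
  nystrom_refactor_identity_general K hK s h2
end

section
/- For a positive definite n×n matrix L with K := L^{-1} and a nonempty index subset I, the time integral of the compressed dynamics equals the Nyström approximation: ∫_0^∞ V e^{-(V^T L V) t} V^T dt = K_{:,I} (K_{I,I})^{-1} K_{I,:}, where V = orth(K_{:,I}). -/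
/-!
With `C = K_{:,s}` and `R = ((K²)_{s,s})^{1/2}` invertible, `V = C R⁻¹` and the compressed
generator is `A = Vᵀ L V = R⁻ᵀ K_{s,s} R⁻¹`, since `Cᵀ L C = (K L K)_{s,s} = K_{s,s}`. Hence `A` is
positive definite, and in an eigenbasis of `A` the integral of `e^{-tA}` over `(0, ∞)` is
computed eigenvalue by eigenvalue: it is `A⁻¹`. Finally `V A⁻¹ Vᵀ = C (Cᵀ L C)⁻¹ Cᵀ`, because
`C R (Rᵀ Cᵀ L C R)⁻¹ Rᵀ Cᵀ` does not depend on the invertible factor `R`.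
-/

open Matrix MeasureTheory

attribute [local instance] Matrix.normedAddCommGroup Matrix.normedSpace

/-- The square root of a positive semidefinite matrix, as `Matrix.PosSemidef.sqrt` was defined
in Mathlib of December 2024 (removed since). -/
noncomputable def Matrix.PosSemidef.sqrt {m 𝕜 : Type*} [Fintype m] [DecidableEq m] [RCLike 𝕜]
    [PartialOrder 𝕜] {A : Matrix m m 𝕜} (hA : A.PosSemidef) : Matrix m m 𝕜 :=
  (hA.1.eigenvectorUnitary : Matrix m m 𝕜) * diagonal (((↑) : ℝ → 𝕜) ∘ (√·) ∘ hA.1.eigenvalues) *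
    (star hA.1.eigenvectorUnitary : Matrix m m 𝕜)

lemma integral_exp_neg_mul_Ioi {b : ℝ} (hb : 0 < b) :
    ∫ t in Set.Ioi (0 : ℝ), Real.exp (-t * b) = b⁻¹ := by
  simpa [mul_comm, div_neg, neg_div] using integral_exp_mul_Ioi (neg_neg_of_pos hb) 0

lemma integrableOn_exp_neg_mul_Ioi {b : ℝ} (hb : 0 < b) :
    IntegrableOn (fun t => Real.exp (-t * b)) (Set.Ioi 0) := by
  simpa [mul_comm] using integrableOn_exp_mul_Ioi (neg_neg_of_pos hb) 0

namespace Matrix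

open scoped MatrixOrder

section FunctionalCalculus

variable {m : Type*} [Fintype m] [DecidableEq m] {A : Matrix m m ℝ}

lemma PosSemidef.sqrt_eq_cfc (hA : A.PosSemidef) : hA.sqrt = cfc Real.sqrt A := by
  rw [hA.isHermitian.cfc_eq, IsHermitian.cfc, Unitary.conjStarAlgAut_apply]
  rfl

lemma PosDef.isUnit_sqrt (hA : A.PosDef) : IsUnit hA.posSemidef.sqrt := by
  rw [hA.posSemidef.sqrt_eq_cfc, isUnit_cfc_iff Real.sqrt A (ha := hA.isHermitian.isSelfAdjoint)]
  exact fun x hx => (Real.sqrt_pos.2 (hA.isStrictlyPositive.spectrum_pos hx)).ne'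

lemma PosDef.inv_eq_cfc (hA : A.PosDef) : A⁻¹ = cfc (·⁻¹ : ℝ → ℝ) A := by
  have hA' := hA.isHermitian.isSelfAdjoint
  have h0 : ∀ x ∈ spectrum ℝ A, x ≠ 0 := fun x hx => (hA.isStrictlyPositive.spectrum_pos hx).ne'
  refine inv_eq_left_inv ?_
  conv_lhs => enter [2]; rw [← cfc_id' ℝ A]
  rw [← cfc_mul _ _ A (continuousOn_inv₀.mono h0), ← cfc_one ℝ A]
  exact cfc_congr fun x hx => inv_mul_cancel₀ (h0 x hx)

/-- `NormedSpace.exp` only sees the topology of `Matrix m m ℝ`, so the library identity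
`cfc Real.exp a = exp a` may be applied through any Banach-algebra norm, here the `L∞` operator
norm. -/
lemma IsHermitian.exp_eq_cfc (hA : A.IsHermitian) : NormedSpace.exp A = cfc Real.exp A :=
  (@CFC.real_exp_eq_normedSpace_exp _ Matrix.linftyOpNormedRing _ Matrix.linftyOpNormedAlgebra
    IsHermitian.instContinuousFunctionalCalculus A hA.isSelfAdjoint).symm

lemma IsHermitian.exp_smul_eq_cfc (hA : A.IsHermitian) (t : ℝ) :
    NormedSpace.exp (t • A) = cfc (fun x => Real.exp (t * x)) A := by
  rw [(hA.smul (IsSelfAdjoint.all t)).exp_eq_cfc, ← cfc_comp_const_mul t Real.exp A]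

lemma IsHermitian.cfc_eq_sum (hA : A.IsHermitian) (f : ℝ → ℝ) :
    cfc f A = ∑ i, f (hA.eigenvalues i) • ((hA.eigenvectorUnitary : Matrix m m ℝ) *
      single i i 1 * star (hA.eigenvectorUnitary : Matrix m m ℝ)) := by
  have hdiag : diagonal (RCLike.ofReal ∘ f ∘ hA.eigenvalues) =
      ∑ i, f (hA.eigenvalues i) • single i i (1 : ℝ) := by
    simp [← sum_single_eq_diagonal, smul_single]
  rw [hA.cfc_eq, IsHermitian.cfc, Unitary.conjStarAlgAut_apply, hdiag]
  simp only [Matrix.mul_sum, Matrix.sum_mul, Matrix.mul_smul, Matrix.smul_mul]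

lemma IsHermitian.setIntegral_mul_cfc_mul {p q : Type*} [Fintype p] [Fintype q]
    (hA : A.IsHermitian) (P : Matrix p m ℝ) (Q : Matrix m q ℝ) {s : Set ℝ} {f : ℝ → ℝ → ℝ}
    (hf : ∀ x ∈ spectrum ℝ A, IntegrableOn (f · x) s) :
    ∫ t in s, P * cfc (f t) A * Q = P * cfc (fun x => ∫ t in s, f t x) A * Q := by
  simp only [hA.cfc_eq_sum, Matrix.mul_sum, Matrix.sum_mul, Matrix.mul_smul, Matrix.smul_mul]
  rw [integral_finsetSum _ fun i _ => (hf _ (hA.eigenvalues_mem_spectrum_real i)).smul_const _]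
  simp only [integral_smul_const]

lemma PosDef.setIntegral_Ioi_mul_exp_neg_smul_mul {p q : Type*} [Fintype p] [Fintype q]
    (hA : A.PosDef) (P : Matrix p m ℝ) (Q : Matrix m q ℝ) :
    ∫ t in Set.Ioi (0 : ℝ), P * NormedSpace.exp ((-t) • A) * Q = P * A⁻¹ * Q := by
  have hpos : ∀ x ∈ spectrum ℝ A, 0 < x := fun x hx => hA.isStrictlyPositive.spectrum_pos hx
  simp only [hA.isHermitian.exp_smul_eq_cfc]
  rw [hA.isHermitian.setIntegral_mul_cfc_mul P Q fun x hx => integrableOn_exp_neg_mul_Ioi (hpos x hx),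
    hA.inv_eq_cfc]
  exact congrArg (P * · * Q) (cfc_congr fun x hx => integral_exp_neg_mul_Ioi (hpos x hx))

end FunctionalCalculus

lemma mul_mul_inv_transpose_mul_mul_eq_of_isUnit {α n s : Type*} [CommRing α] [Fintype n]
    [Fintype s] [DecidableEq s] (C : Matrix n s α) (L : Matrix n n α) {R : Matrix s s α}
    (hR : IsUnit R) :
    C * R * ((C * R)ᵀ * L * (C * R))⁻¹ * (C * R)ᵀ = C * (Cᵀ * L * C)⁻¹ * Cᵀ := by
  rw [isUnit_iff_isUnit_det] at hR
  have hRT : IsUnit Rᵀ.det := by rwa [det_transpose]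
  rw [transpose_mul,
    show Rᵀ * Cᵀ * L * (C * R) = Rᵀ * (Cᵀ * L * C) * R by simp only [Matrix.mul_assoc],
    mul_inv_rev, mul_inv_rev]
  simp only [Matrix.mul_assoc]
  rw [mul_nonsing_inv_cancel_left R _ hR, nonsing_inv_mul_cancel_left Rᵀ _ hRT]

lemma submatrix_mul_mul_submatrix_of_mul_eq_one {α n s : Type*} [Semiring α] [Fintype n]
    [DecidableEq n] {K L : Matrix n n α} (hKL : K * L = 1) (e : s → n) :
    K.submatrix e id * L * K.submatrix id e = K.submatrix e e := by
  rw [← submatrix_id_id L, ← submatrix_mul _ _ _ _ _ Function.bijective_id,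
    ← submatrix_mul _ _ _ _ _ Function.bijective_id, hKL, Matrix.one_mul]

end Matrix

theorem integral_compressed_dynamics_eq_nystrom_general {n : ℕ} (L : Matrix (Fin n) (Fin n) ℝ)
    (hL : L.PosDef) (s : Finset (Fin n))
    (K : Matrix (Fin n) (Fin n) ℝ) (hK : K = L⁻¹)
    (h2 : ((K * K).submatrix (Subtype.val : s → Fin n) (Subtype.val : s → Fin n)).PosDef) :
    letI V : Matrix (Fin n) s ℝ :=
      K.submatrix id (Subtype.val : s → Fin n) * (h2.posSemidef.sqrt)⁻¹
    ∫ t in Set.Ioi (0 : ℝ), V * NormedSpace.exp ((-t) • (Vᵀ * L * V)) * Vᵀ =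
      K.submatrix id (Subtype.val : s → Fin n) *
        (K.submatrix (Subtype.val : s → Fin n) (Subtype.val : s → Fin n))⁻¹ *
        K.submatrix (Subtype.val : s → Fin n) id := by
  set C := K.submatrix id (Subtype.val : s → Fin n)
  set S := h2.posSemidef.sqrt
  have hKpd : K.PosDef := hK ▸ hL.inv
  have hKT : Kᵀ = K := hKpd.isHermitian
  have hKL : K * L = 1 := hK ▸ nonsing_inv_mul L ((isUnit_iff_isUnit_det L).1 hL.isUnit)
  have hCLC : Cᵀ * L * C = K.submatrix Subtype.val Subtype.val := by
    rw [transpose_submatrix, hKT]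
    exact submatrix_mul_mul_submatrix_of_mul_eq_one hKL _
  have hS : IsUnit S⁻¹ := isUnit_nonsing_inv_iff.2 h2.isUnit_sqrt
  have hA : ((C * S⁻¹)ᵀ * L * (C * S⁻¹)).PosDef := by
    rw [show (C * S⁻¹)ᵀ * L * (C * S⁻¹) = star S⁻¹ * (Cᵀ * L * C) * S⁻¹ by
      simp only [transpose_mul, Matrix.mul_assoc]; rfl, hCLC]
    exact (IsUnit.posDef_star_left_conjugate_iff hS).2 (hKpd.submatrix Subtype.val_injective)
  rw [hA.setIntegral_Ioi_mul_exp_neg_smul_mul, mul_mul_inv_transpose_mul_mul_eq_of_isUnit C L hS,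
    hCLC, transpose_submatrix, hKT]

/-- For positive definite `L` with `K := L⁻¹` and a nonempty index subset `s`,
the time integral of the compressed dynamics recovers the Nyström approximation:
`∫_0^∞ V e^{-(Vᵀ L V) t} Vᵀ dt = K_{:,s} (K_{s,s})⁻¹ K_{s,:}`,
where `V = orth(K_{:,s}) = K_{:,s} ((K²)_{s,s})^{-1/2}` has orthonormal columns spanning the
column space of `K_{:,s}`.  (The hypothesis `h2`, positive definiteness of `(K²)_{s,s}`, is a
consequence of positive definiteness of `K` and is supplied to form the square root.) -/
theorem integral_compressed_dynamics_eq_nystrom {n : ℕ} (L : Matrix (Fin n) (Fin n) ℝ)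
    (hL : L.PosDef) (s : Finset (Fin n)) (hs : s.Nonempty)
    (K : Matrix (Fin n) (Fin n) ℝ) (hK : K = L⁻¹)
    (h2 : ((K * K).submatrix (Subtype.val : s → Fin n) (Subtype.val : s → Fin n)).PosDef) :
    letI V : Matrix (Fin n) s ℝ :=
      K.submatrix id (Subtype.val : s → Fin n) * (h2.posSemidef.sqrt)⁻¹
    ∫ t in Set.Ioi (0 : ℝ), V * NormedSpace.exp ((-t) • (Vᵀ * L * V)) * Vᵀ =
      K.submatrix id (Subtype.val : s → Fin n) *
        (K.submatrix (Subtype.val : s → Fin n) (Subtype.val : s → Fin n))⁻¹ *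
        K.submatrix (Subtype.val : s → Fin n) id :=
  integral_compressed_dynamics_eq_nystrom_general L hL s K hK h2
end

section
/- For real numbers a > 0, b, and λ > 0, writing z = a + bi, the quantity (a² + b²)^{-1/4} (b²λ² + (λ^{-1} - aλ)²)^{-1/2} is maximized over λ > 0 at λ = (a² + b²)^{-1/4}, with maximum value 2^{-1/2} (1 - a/√(a²+b²))^{-1/2} (a²+b²)^{-1/2}. -/
/-! Writing `r = √(a² + b²)`, the identity
`b²λ² + (λ⁻¹ - aλ)² = (λ⁻¹ - rλ)² + 2(r - a)` shows that the expression under the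
`-1/2` power is at least `2(r - a) > 0`, with equality exactly when `rλ² = 1`, i.e. at
`λ = (a² + b²)^{-1/4}`. The claimed maximum is `(a² + b²)^{-1/4} (2(r - a))^{-1/2}` rewritten. -/

open Real

section Field

variable {K : Type*} [Field K] {a b r l : K}

theorem sq_mul_sq_add_inv_sub_mul_sq_eq (hr : r ^ 2 = a ^ 2 + b ^ 2) (hl : l ≠ 0) :
    b ^ 2 * l ^ 2 + (l⁻¹ - a * l) ^ 2 = (l⁻¹ - r * l) ^ 2 + 2 * (r - a) := by
  field_simp
  linear_combination (-l ^ 4) * hr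

theorem sq_mul_sq_add_inv_sub_mul_sq_eq_of_mul_sq_eq_one (hr : r ^ 2 = a ^ 2 + b ^ 2)
    (hrl : r * l ^ 2 = 1) :
    b ^ 2 * l ^ 2 + (l⁻¹ - a * l) ^ 2 = 2 * (r - a) := by
  have hl : l ≠ 0 := by
    rintro rfl
    simp at hrl
  have hcrit : l⁻¹ - r * l = 0 := by
    field_simp
    linear_combination -hrl
  rw [sq_mul_sq_add_inv_sub_mul_sq_eq hr hl, hcrit]
  ring

theorem two_mul_sub_le_sq_mul_sq_add_inv_sub_mul_sq [LinearOrder K] [IsStrictOrderedRing K]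
    (hr : r ^ 2 = a ^ 2 + b ^ 2) (hl : l ≠ 0) :
    2 * (r - a) ≤ b ^ 2 * l ^ 2 + (l⁻¹ - a * l) ^ 2 := by
  rw [sq_mul_sq_add_inv_sub_mul_sq_eq hr hl]
  exact le_add_of_nonneg_left (sq_nonneg _)

end Field

theorem lt_sqrt_sq_add_sq (a : ℝ) {b : ℝ} (hb : b ≠ 0) : a < √(a ^ 2 + b ^ 2) :=
  calc a ≤ |a| := le_abs_self a
    _ = √(a ^ 2) := (sqrt_sq_eq_abs a).symm
    _ < √(a ^ 2 + b ^ 2) := sqrt_lt_sqrt (sq_nonneg a) (lt_add_of_pos_right _ (by positivity))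

theorem sqrt_mul_sq_rpow_neg_one_div_four {s : ℝ} (hs : 0 < s) :
    √s * (s ^ (-(1 / 4 : ℝ))) ^ 2 = 1 := by
  rw [sqrt_eq_rpow, ← rpow_mul_natCast hs.le, ← rpow_add hs]
  norm_num

theorem rpow_neg_one_div_two_mul_one_sub_div_sqrt {s a : ℝ} (hs : 0 < s) (ha : a < √s) :
    (2 : ℝ) ^ (-(1 / 2 : ℝ)) * (1 - a / √s) ^ (-(1 / 2 : ℝ)) * s ^ (-(1 / 2 : ℝ)) =
      s ^ (-(1 / 4 : ℝ)) * (2 * (√s - a)) ^ (-(1 / 2 : ℝ)) := by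
  have hr : 0 < √s := sqrt_pos.2 hs
  have hsqrt : √s ^ (-(1 / 2 : ℝ)) = s ^ (-(1 / 4 : ℝ)) := by
    rw [sqrt_eq_rpow, ← rpow_mul hs.le]
    norm_num
  have hhalf : s ^ (-(1 / 2 : ℝ)) = s ^ (-(1 / 4 : ℝ)) * s ^ (-(1 / 4 : ℝ)) := by
    rw [← rpow_add hs]
    norm_num
  have hquarter : 0 < s ^ (-(1 / 4 : ℝ)) := rpow_pos_of_pos hs _
  rw [show 1 - a / √s = (√s - a) / √s by field_simp, div_rpow (by linarith) hr.le,
    mul_rpow zero_le_two (by linarith), hsqrt, hhalf]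
  field_simp

theorem scalar_resolvent_optimization_general (a b : ℝ) (hb : b ≠ 0) :
    letI f : ℝ → ℝ := fun l =>
      (a ^ 2 + b ^ 2) ^ (-(1 / 4 : ℝ)) *
        (b ^ 2 * l ^ 2 + (l⁻¹ - a * l) ^ 2) ^ (-(1 / 2 : ℝ))
    (∀ l : ℝ, 0 < l →
        f l ≤ (2 : ℝ) ^ (-(1 / 2 : ℝ)) *
          (1 - a / Real.sqrt (a ^ 2 + b ^ 2)) ^ (-(1 / 2 : ℝ)) *
          (a ^ 2 + b ^ 2) ^ (-(1 / 2 : ℝ))) ∧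
      f ((a ^ 2 + b ^ 2) ^ (-(1 / 4 : ℝ))) =
        (2 : ℝ) ^ (-(1 / 2 : ℝ)) *
          (1 - a / Real.sqrt (a ^ 2 + b ^ 2)) ^ (-(1 / 2 : ℝ)) *
          (a ^ 2 + b ^ 2) ^ (-(1 / 2 : ℝ)) := by
  have hs : 0 < a ^ 2 + b ^ 2 := by positivity
  have hra := lt_sqrt_sq_add_sq a hb
  have hr : √(a ^ 2 + b ^ 2) ^ 2 = a ^ 2 + b ^ 2 := sq_sqrt hs.le
  rw [rpow_neg_one_div_two_mul_one_sub_div_sqrt hs hra]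
  refine ⟨fun l hl => ?_, ?_⟩
  · exact mul_le_mul_of_nonneg_left
      (rpow_le_rpow_of_nonpos (by linarith)
        (two_mul_sub_le_sq_mul_sq_add_inv_sub_mul_sq hr hl.ne') (by norm_num))
      (rpow_nonneg hs.le _)
  · dsimp only
    rw [sq_mul_sq_add_inv_sub_mul_sq_eq_of_mul_sq_eq_one hr
      (sqrt_mul_sq_rpow_neg_one_div_four hs)]

/-- **scalar optimization behind the resolvent bound.**
For `a > 0`, `b ≠ 0`, the function
`f(λ) = (a² + b²)^{-1/4} (b²λ² + (λ⁻¹ - aλ)²)^{-1/2}`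
is maximized over `λ > 0` at `λ = (a² + b²)^{-1/4}`, with maximum value
`2^{-1/2} (1 - a/√(a²+b²))^{-1/2} (a²+b²)^{-1/2}`. -/
theorem scalar_resolvent_optimization (a b : ℝ) (ha : 0 < a) (hb : b ≠ 0) :
    letI f : ℝ → ℝ := fun l =>
      (a ^ 2 + b ^ 2) ^ (-(1 / 4 : ℝ)) *
        (b ^ 2 * l ^ 2 + (l⁻¹ - a * l) ^ 2) ^ (-(1 / 2 : ℝ))
    (∀ l : ℝ, 0 < l →
        f l ≤ (2 : ℝ) ^ (-(1 / 2 : ℝ)) *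
          (1 - a / Real.sqrt (a ^ 2 + b ^ 2)) ^ (-(1 / 2 : ℝ)) *
          (a ^ 2 + b ^ 2) ^ (-(1 / 2 : ℝ))) ∧
      f ((a ^ 2 + b ^ 2) ^ (-(1 / 4 : ℝ))) =
        (2 : ℝ) ^ (-(1 / 2 : ℝ)) *
          (1 - a / Real.sqrt (a ^ 2 + b ^ 2)) ^ (-(1 / 2 : ℝ)) *
          (a ^ 2 + b ^ 2) ^ (-(1 / 2 : ℝ)) :=
  scalar_resolvent_optimization_general a b hb
end

section
/- Let A₁₁, A₁₂, A₂₁, A₂₂ be matrix blocks of compatible sizes and define A_α as the block matrix [[A₁₁, A₁₂],[A₂₁, A₂₂ + αI]] for α ≥ 0. Then as α → ∞, e^{-A_α} converges to the block matrix [[e^{-A₁₁}, 0],[0, 0]]. -/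
/-!
Write `Q` for the projection onto the second block and `P = 1 - Q`, so that `-A_α = A - α Q`
with `A = -[[A₁₁, A₁₂], [A₂₁, A₂₂]]`. Since `exp (-c Q) = P + e^{-c} Q`, Duhamel's formula
relative to `exp (-t α Q)` and Grönwall's inequality bound `exp (t (A - α Q))` uniformly in
`α ≥ 0`, and the same formula shows `Q exp (t (A - α Q)) → 0` for `t > 0`. Duhamel's formula
relative to `exp (PAP - α Q) = exp (PAP) (P + e^{-α} Q) → exp (PAP) P` leaves an integral whose
integrand carries a factor `Q` next to one of the two exponentials, because
`A - PAP = QA + PAQ`; it tends to zero by dominated convergence.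
-/

open Filter NormedSpace Set Topology MeasureTheory

theorem le_mul_exp_of_le_add_mul_integral {f : ℝ → ℝ} {C K T : ℝ} (hf : Continuous f)
    (hK : 0 ≤ K) (h : ∀ t ∈ Icc 0 T, f t ≤ C + K * ∫ s in 0..t, f s) :
    ∀ t ∈ Icc 0 T, f t ≤ C * Real.exp (K * t) := by
  set u : ℝ → ℝ := fun t => ∫ s in 0..t, f s
  have hu : ∀ t, HasDerivAt u (f t) t := fun t =>
    intervalIntegral.integral_hasDerivAt_right (hf.intervalIntegrable 0 t)
      (hf.stronglyMeasurableAtFilter _ _) hf.continuousAt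
  intro t ht
  have hut : u t ≤ gronwallBound 0 K C t := by
    simpa using le_gronwallBound_of_liminf_deriv_right_le (f := u) (f' := f)
      (fun x _ => (hu x).continuousAt.continuousWithinAt)
      (fun x _ r hr => (hu x).hasDerivWithinAt.liminf_right_slope_le hr) (by simp [u])
      (fun x hx => (h x (Ico_subset_Icc_self hx)).trans_eq (by ring)) t ht
  rcases hK.eq_or_lt with rfl | hK
  · simpa using h t ht
  · rw [gronwallBound_of_K_ne_0 hK.ne'] at hut
    calc f t ≤ C + K * u t := h t ht
      _ ≤ C + K * (0 * Real.exp (K * t) + C / K * (Real.exp (K * t) - 1)) := by gcongr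
      _ = C * Real.exp (K * t) := by field_simp; ring

theorem tendsto_intervalIntegral_zero_of_bounded {ι E : Type*} [NormedAddCommGroup E]
    [NormedSpace ℝ E] {l : Filter ι} [l.IsCountablyGenerated] {F : ι → ℝ → E} {t M : ℝ}
    (ht : 0 ≤ t) (hF : ∀ i, Continuous (F i)) (hbound : ∀ᶠ i in l, ∀ s ∈ Ioc 0 t, ‖F i s‖ ≤ M)
    (hlim : ∀ s ∈ Ioo 0 t, Tendsto (fun i => F i s) l (𝓝 0)) :
    Tendsto (fun i => ∫ s in 0..t, F i s) l (𝓝 0) := by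
  simpa only [intervalIntegral.integral_zero] using
    intervalIntegral.tendsto_integral_filter_of_dominated_convergence (f := fun _ => 0) (fun _ => M)
    (Eventually.of_forall fun i => (hF i).aestronglyMeasurable)
    (hbound.mono fun i hi => ae_of_all _ fun s hs => hi s (uIoc_of_le ht ▸ hs))
    intervalIntegrable_const
    (by
      filter_upwards [Measure.ae_ne volume t] with s hst hs
      rw [uIoc_of_le ht] at hs
      exact hlim s ⟨hs.1, lt_of_le_of_ne hs.2 hst⟩)

section BanachAlgebra

variable {𝔸 : Type*} [NormedRing 𝔸] [NormedAlgebra ℝ 𝔸] [CompleteSpace 𝔸]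

theorem IsIdempotentElem.exp_smul {Q : 𝔸} (hQ : IsIdempotentElem Q) (c : ℝ) :
    exp (c • Q) = 1 - Q + Real.exp c • Q := by
  have hterm : ∀ n : ℕ, ((n.factorial : ℝ)⁻¹) • (c • Q) ^ n =
      Pi.single (M := fun _ => 𝔸) 0 (1 - Q) n + ((n.factorial : ℝ)⁻¹ * c ^ n) • Q := by
    rintro (_ | n)
    · simp
    · simp [smul_pow, hQ.pow_succ_eq, mul_smul]
  have hsum := (hasSum_pi_single 0 (1 - Q)).add
    ((NormedSpace.exp_series_hasSum_exp' (𝕂 := ℝ) c).smul_const Q)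
  rw [← Real.exp_eq_exp_ℝ] at hsum
  simp only [smul_eq_mul] at hsum
  exact (exp_series_hasSum_exp' (𝕂 := ℝ) (c • Q)).unique (by simpa only [hterm] using hsum)

theorem IsIdempotentElem.norm_exp_smul_le {Q : 𝔸} (hQ : IsIdempotentElem Q) {c : ℝ}
    (hc : c ≤ 0) : ‖exp (c • Q)‖ ≤ ‖1 - Q‖ + ‖Q‖ := by
  rw [hQ.exp_smul]
  refine (norm_add_le _ _).trans (add_le_add_right ?_ _)
  rw [norm_smul, Real.norm_of_nonneg (Real.exp_pos c).le]
  exact mul_le_of_le_one_left (norm_nonneg Q) (Real.exp_le_one_iff.2 hc)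

theorem IsIdempotentElem.mul_exp_smul {Q : 𝔸} (hQ : IsIdempotentElem Q) (c : ℝ) :
    Q * exp (c • Q) = Real.exp c • Q := by
  rw [hQ.exp_smul, mul_add, hQ.mul_one_sub_self, mul_smul_comm, hQ.eq, zero_add]

variable [NormedAlgebra ℚ 𝔸]

theorem exp_smul_add_sub_exp_smul_eq_integral (X Y : 𝔸) (t : ℝ) :
    exp (t • (X + Y)) - exp (t • Y) =
      ∫ s in 0..t, exp ((t - s) • Y) * X * exp (s • (X + Y)) := by
  have hderiv : ∀ s : ℝ, HasDerivAt (fun u : ℝ => exp ((t - u) • Y) * exp (u • (X + Y)))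
      (exp ((t - s) • Y) * X * exp (s • (X + Y))) s := by
    intro s
    have hY : HasDerivAt (fun u : ℝ => exp ((t - u) • Y)) (-(exp ((t - s) • Y) * Y)) s := by
      simpa [Function.comp_def] using (hasDerivAt_exp_smul_const (𝕂 := ℝ) Y (t - s)).scomp s
        ((hasDerivAt_id s).const_sub t)
    exact (hY.mul (hasDerivAt_exp_smul_const' (𝕂 := ℝ) (X + Y) s)).congr_deriv (by noncomm_ring)
  rw [intervalIntegral.integral_eq_sub_of_hasDerivAt (fun s _ => hderiv s)
    (Continuous.intervalIntegrable (by fun_prop) _ _)]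
  simp

theorem exp_smul_sub_smul_eq_add_integral (A Q : 𝔸) (α t : ℝ) :
    exp (t • (A - α • Q)) = exp ((-(t * α)) • Q) +
      ∫ s in 0..t, exp ((-((t - s) * α)) • Q) * A * exp (s • (A - α • Q)) := by
  have h := exp_smul_add_sub_exp_smul_eq_integral A ((-α) • Q) t
  rw [show A + (-α) • Q = A - α • Q by rw [neg_smul, sub_eq_add_neg]] at h
  simp only [smul_smul, mul_neg] at h
  rw [← h, add_sub_cancel]

theorem IsIdempotentElem.norm_exp_smul_sub_smul_le {Q : 𝔸} (hQ : IsIdempotentElem Q) (A : 𝔸)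
    {α t T : ℝ} (hα : 0 ≤ α) (ht : t ∈ Icc 0 T) :
    ‖exp (t • (A - α • Q))‖ ≤ (‖1 - Q‖ + ‖Q‖) * Real.exp ((‖1 - Q‖ + ‖Q‖) * ‖A‖ * T) := by
  set c := ‖1 - Q‖ + ‖Q‖
  have hQexp : ∀ r, 0 ≤ r → ‖exp ((-(r * α)) • Q)‖ ≤ c := fun r hr =>
    hQ.norm_exp_smul_le (neg_nonpos.2 (mul_nonneg hr hα))
  have hgronwall : ∀ r ∈ Icc 0 T, ‖exp (r • (A - α • Q))‖ ≤
      c + c * ‖A‖ * ∫ s in 0..r, ‖exp (s • (A - α • Q))‖ := by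
    intro r ⟨hr, _⟩
    rw [exp_smul_sub_smul_eq_add_integral, ← intervalIntegral.integral_const_mul]
    refine norm_add_le_of_le (hQexp r hr) ?_
    refine (intervalIntegral.norm_integral_le_integral_norm hr).trans
      (intervalIntegral.integral_mono_on hr
        (Continuous.intervalIntegrable (by fun_prop) _ _)
        (Continuous.intervalIntegrable (by fun_prop) _ _) fun s hs => ?_)
    refine norm_mul₃_le.trans ?_
    gcongr
    exact hQexp _ (sub_nonneg.2 hs.2)
  calc ‖exp (t • (A - α • Q))‖ ≤ c * Real.exp (c * ‖A‖ * t) :=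
        le_mul_exp_of_le_add_mul_integral (by fun_prop) (by positivity) hgronwall t ht
    _ ≤ c * Real.exp (c * ‖A‖ * T) := by gcongr; exact ht.2

theorem IsIdempotentElem.mul_exp_smul_sub_smul_eq_add_integral {Q : 𝔸}
    (hQ : IsIdempotentElem Q) (A : 𝔸) (α t : ℝ) :
    Q * exp (t • (A - α • Q)) = Real.exp (-(t * α)) • Q +
      ∫ s in 0..t, Real.exp (-((t - s) * α)) • (Q * A * exp (s • (A - α • Q))) := by
  have hint : IntervalIntegrable
      (fun s => exp ((-((t - s) * α)) • Q) * A * exp (s • (A - α • Q))) volume 0 t :=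
    Continuous.intervalIntegrable (by fun_prop) _ _
  have hQint : Q * ∫ s in 0..t, exp ((-((t - s) * α)) • Q) * A * exp (s • (A - α • Q)) =
      ∫ s in 0..t, Q * (exp ((-((t - s) * α)) • Q) * A * exp (s • (A - α • Q))) :=
    ((ContinuousLinearMap.mul ℝ 𝔸 Q).intervalIntegral_comp_comm hint).symm
  rw [exp_smul_sub_smul_eq_add_integral, mul_add, hQ.mul_exp_smul, hQint]
  simp only [← mul_assoc, hQ.mul_exp_smul, smul_mul_assoc]

theorem IsIdempotentElem.tendsto_mul_exp_smul_sub_smul {Q : 𝔸} (hQ : IsIdempotentElem Q)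
    (A : 𝔸) {t : ℝ} (ht : 0 < t) :
    Tendsto (fun α : ℝ => Q * exp (t • (A - α • Q))) atTop (𝓝 0) := by
  have hdecay : ∀ r, 0 < r → Tendsto (fun α : ℝ => Real.exp (-(r * α))) atTop (𝓝 0) :=
    fun r hr => Real.tendsto_exp_neg_atTop_nhds_zero.comp (tendsto_id.const_mul_atTop hr)
  set M := ‖Q * A‖ * ((‖1 - Q‖ + ‖Q‖) * Real.exp ((‖1 - Q‖ + ‖Q‖) * ‖A‖ * t))
  have hbound : ∀ α s : ℝ, 0 ≤ α → s ∈ Ioc 0 t → ‖Q * A * exp (s • (A - α • Q))‖ ≤ M :=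
    fun α s hα hs => (norm_mul_le _ _).trans (mul_le_mul_of_nonneg_left
      (hQ.norm_exp_smul_sub_smul_le A (α := α) hα (Ioc_subset_Icc_self hs)) (norm_nonneg _))
  have hintegral : Tendsto (fun α : ℝ => ∫ s in 0..t,
      Real.exp (-((t - s) * α)) • (Q * A * exp (s • (A - α • Q)))) atTop (𝓝 0) :=
    tendsto_intervalIntegral_zero_of_bounded ht.le (fun α => by fun_prop)
      ((eventually_ge_atTop 0).mono fun α hα s hs => by
        rw [norm_smul, Real.norm_of_nonneg (Real.exp_pos _).le]
        exact (mul_le_of_le_one_left (norm_nonneg _)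
          (Real.exp_le_one_iff.2 (by nlinarith [hs.2]))).trans (hbound α s hα hs))
      fun s hs => (hdecay (t - s) (sub_pos.2 hs.2)).zero_smul_isBoundedUnder_le
        (isBoundedUnder_of_eventually_le ((eventually_ge_atTop 0).mono fun α hα =>
          hbound α s hα (Ioo_subset_Ioc_self hs)))
  simpa only [hQ.mul_exp_smul_sub_smul_eq_add_integral, zero_smul, add_zero] using
    ((hdecay t ht).smul_const Q).add hintegral

theorem IsIdempotentElem.tendsto_exp_sub_smul_of_commute {Q B : 𝔸} (hQ : IsIdempotentElem Q)
    (hBQ : Commute B Q) :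
    Tendsto (fun α : ℝ => exp (B - α • Q)) atTop (𝓝 (exp B * (1 - Q))) := by
  have h : ∀ α : ℝ, exp (B - α • Q) = exp B * (1 - Q + Real.exp (-α) • Q) := by
    intro α
    rw [sub_eq_add_neg, ← neg_smul, exp_add_of_commute (hBQ.smul_right _), hQ.exp_smul]
  simp only [h]
  simpa using tendsto_const_nhds.mul (tendsto_const_nhds.add
    (Real.tendsto_exp_neg_atTop_nhds_zero.smul_const Q))

theorem IsIdempotentElem.tendsto_exp_mul_mul_exp {Q B : 𝔸} (hQ : IsIdempotentElem Q)
    (hBQ : Commute B Q) (A C D : 𝔸) {t u : ℝ} (ht : 0 < t) (hu : 0 < u) :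
    Tendsto (fun α : ℝ => exp (u • (B - α • Q)) * (Q * C + D * Q) * exp (t • (A - α • Q)))
      atTop (𝓝 0) := by
  have hsplit : ∀ α : ℝ,
      exp (u • (B - α • Q)) * (Q * C + D * Q) * exp (t • (A - α • Q)) =
        Q * exp (u • (B - α • Q)) * (C * exp (t • (A - α • Q))) +
          exp (u • (B - α • Q)) * D * (Q * exp (t • (A - α • Q))) := by
    intro α
    have hcomm : Commute (u • (B - α • Q)) Q :=
      (hBQ.sub_left ((Commute.refl Q).smul_left α)).smul_left u
    rw [← hcomm.exp_left.eq]
    noncomm_ring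
  have hC := isBoundedUnder_of_eventually_le ((eventually_ge_atTop 0).mono fun α hα =>
    (norm_mul_le C _).trans (mul_le_mul_of_nonneg_left
      (hQ.norm_exp_smul_sub_smul_le A hα ⟨ht.le, le_refl t⟩) (norm_nonneg C)))
  have hD := isBoundedUnder_of_eventually_le ((eventually_ge_atTop 0).mono fun α hα =>
    (norm_mul_le _ D).trans (mul_le_mul_of_nonneg_right
      (hQ.norm_exp_smul_sub_smul_le B hα ⟨hu.le, le_refl u⟩) (norm_nonneg D)))
  simp only [hsplit]
  simpa using ((hQ.tendsto_mul_exp_smul_sub_smul B hu).zero_mul_isBoundedUnder_le hC).add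
    (isBoundedUnder_le_mul_tendsto_zero hD (hQ.tendsto_mul_exp_smul_sub_smul A ht))

theorem IsIdempotentElem.tendsto_integral_exp_mul_mul_exp {Q B : 𝔸} (hQ : IsIdempotentElem Q)
    (hBQ : Commute B Q) (A C D : 𝔸) :
    Tendsto (fun α : ℝ => ∫ s in 0..1,
      exp ((1 - s) • (B - α • Q)) * (Q * C + D * Q) * exp (s • (A - α • Q))) atTop (𝓝 0) := by
  set K := ‖1 - Q‖ + ‖Q‖
  refine tendsto_intervalIntegral_zero_of_bounded zero_le_one (fun α => by fun_prop)
    (M := K * Real.exp (K * ‖B‖ * 1) * ‖Q * C + D * Q‖ * (K * Real.exp (K * ‖A‖ * 1)))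
    ((eventually_ge_atTop 0).mono fun α hα s hs => norm_mul₃_le.trans ?_)
    fun s hs => hQ.tendsto_exp_mul_mul_exp hBQ A C D hs.1 (sub_pos.2 hs.2)
  gcongr
  · exact hQ.norm_exp_smul_sub_smul_le B hα ⟨by linarith [hs.2], by linarith [hs.1]⟩
  · exact hQ.norm_exp_smul_sub_smul_le A hα (Ioc_subset_Icc_self hs)

theorem IsIdempotentElem.tendsto_exp_sub_smul {Q : 𝔸} (hQ : IsIdempotentElem Q) (A : 𝔸) :
    Tendsto (fun α : ℝ => exp (A - α • Q)) atTop
      (𝓝 (exp ((1 - Q) * A * (1 - Q)) * (1 - Q))) := by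
  set B := (1 - Q) * A * (1 - Q)
  have hBQ : Commute B Q := by
    simp only [Commute, SemiconjBy, B, mul_assoc, hQ.one_sub_mul_self, ← mul_assoc Q,
      hQ.mul_one_sub_self, mul_zero, zero_mul]
  have hsplit : ∀ α : ℝ, exp (A - α • Q) = exp (B - α • Q) +
      ∫ s in 0..1, exp ((1 - s) • (B - α • Q)) * (Q * A + (1 - Q) * A * Q) *
        exp (s • (A - α • Q)) := by
    intro α
    have h := exp_smul_add_sub_exp_smul_eq_integral (Q * A + (1 - Q) * A * Q) (B - α • Q) 1
    rw [show Q * A + (1 - Q) * A * Q + (B - α • Q) = A - α • Q by simp only [B]; noncomm_ring,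
      one_smul, one_smul] at h
    rw [← h, add_sub_cancel]
  simpa only [hsplit, add_zero] using (hQ.tendsto_exp_sub_smul_of_commute hBQ).add
    (hQ.tendsto_integral_exp_mul_mul_exp hBQ A A ((1 - Q) * A))

end BanachAlgebra

-- Any Banach-algebra norm serves here; no statement below mentions it.
attribute [local instance] Matrix.linftyOpNormedRing Matrix.linftyOpNormedAlgebra

namespace Matrix

variable {m n : Type*} [Fintype m] [Fintype n] [DecidableEq m] [DecidableEq n]

theorem exp_fromBlocks_zero_zero (X : Matrix m m ℝ) (Y : Matrix n n ℝ) :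
    exp (fromBlocks X 0 0 Y) = fromBlocks (exp X) 0 0 (exp Y) := by
  let blockDiag : Matrix m m ℝ × Matrix n n ℝ →+* Matrix (m ⊕ n) (m ⊕ n) ℝ :=
    { toFun := fun XY => fromBlocks XY.1 0 0 XY.2
      map_one' := fromBlocks_one
      map_mul' := fun _ _ => by simp [fromBlocks_multiply]
      map_zero' := fromBlocks_zero
      map_add' := fun _ _ => by simp [fromBlocks_add] }
  have hcont : Continuous blockDiag :=
    continuous_fst.matrix_fromBlocks continuous_const continuous_const continuous_snd
  have hprod : exp (X, Y) = (exp X, exp Y) := Prod.ext (Prod.fst_exp _) (Prod.snd_exp _)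
  exact (map_exp blockDiag hcont (X, Y)).symm.trans (congrArg blockDiag hprod)

theorem tendsto_exp_neg_fromBlocks_add_smul_one (A11 : Matrix m m ℝ) (A12 : Matrix m n ℝ)
    (A21 : Matrix n m ℝ) (A22 : Matrix n n ℝ) :
    Tendsto (fun α : ℝ => exp (-fromBlocks A11 A12 A21 (A22 + α • 1))) atTop
      (𝓝 (fromBlocks (exp (-A11)) 0 0 0)) := by
  set Q : Matrix (m ⊕ n) (m ⊕ n) ℝ := fromBlocks 0 0 0 1
  have hQ : IsIdempotentElem Q := by simp [IsIdempotentElem, Q, fromBlocks_multiply]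
  have hP : 1 - Q = fromBlocks 1 0 0 0 := by
    simp [Q, ← fromBlocks_one, sub_eq_add_neg, fromBlocks_neg, fromBlocks_add]
  have hperturb : ∀ α : ℝ,
      -fromBlocks A11 A12 A21 (A22 + α • 1) = -fromBlocks A11 A12 A21 A22 - α • Q := by
    intro α
    simp [Q, fromBlocks_smul, fromBlocks_neg, fromBlocks_add, sub_eq_add_neg, add_comm]
  have hlimit : fromBlocks (exp (-A11)) 0 0 0 =
      exp ((1 - Q) * -fromBlocks A11 A12 A21 A22 * (1 - Q)) * (1 - Q) := by
    simp [hP, fromBlocks_neg, fromBlocks_multiply, exp_fromBlocks_zero_zero]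
  simp only [hperturb]
  rw [hlimit]
  exact hQ.tendsto_exp_sub_smul _

end Matrix

/-- **Exponential of block perturbation.**
For `α ≥ 0`, let `A_α = [[A₁₁, A₁₂],[A₂₁, A₂₂ + αI]]`.  Then as `α → ∞`,
`e^{-A_α}` converges to the block matrix `[[e^{-A₁₁}, 0],[0, 0]]`. -/
theorem exp_block_perturbation_tendsto {p q : ℕ}
    (A11 : Matrix (Fin p) (Fin p) ℝ) (A12 : Matrix (Fin p) (Fin q) ℝ)
    (A21 : Matrix (Fin q) (Fin p) ℝ) (A22 : Matrix (Fin q) (Fin q) ℝ) :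
    Tendsto
      (fun α : ℝ =>
        NormedSpace.exp (-(Matrix.fromBlocks A11 A12 A21 (A22 + α • 1))))
      atTop
      (nhds (Matrix.fromBlocks (NormedSpace.exp (-A11)) 0 0 0)) :=
  Matrix.tendsto_exp_neg_fromBlocks_add_smul_one A11 A12 A21 A22
end

section
/- Let L be symmetric positive definite on indices [n] partitioned into I and Ī, with K := L^{-1}. Then the nuclear norm of the Nyström error equals the trace of the inverse of the principal block: ‖K - K_{:,I} K_{I,I}^{-1} K_{I,:}‖_* = Tr[(L_{Ī,Ī})^{-1}]. -/
/-! The Nyström residual `E = K - K_{:,s} K_{s,s}⁻¹ K_{s,:}` is the Schur complement of `K_{s,s}`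
in the positive semidefinite matrix `K` reindexed by `s ⊕ n` (with `s` listed twice), so it is
positive semidefinite and its nuclear norm is its trace. Its rows indexed by `s` vanish, so that
trace is the trace of its `sᶜ × sᶜ` block; and since `L * E = 1 - 1_{:,s} K_{s,s}⁻¹ K_{s,:}` has
`sᶜ × sᶜ` block equal to `1`, that block is `(L_{sᶜ,sᶜ})⁻¹`. -/

open Matrix

/-- The nuclear (trace) norm of a matrix: the sum of its singular values, i.e. of the
square roots of the eigenvalues of `Aᵀ A`. -/
noncomputable def nuclearNorm {m n : Type*} [Fintype m] [Fintype n] [DecidableEq n]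
    (A : Matrix m n ℝ) : ℝ :=
  ∑ i, Real.sqrt ((Matrix.isHermitian_conjTranspose_mul_self A).eigenvalues i)

open Finset in
theorem Finset.sum_eq_sum_compl_of_eq_zero {ι M : Type*} [Fintype ι] [DecidableEq ι]
    [AddCommMonoid M] (s : Finset ι) {f : ι → M} (hf : ∀ i ∈ s, f i = 0) :
    ∑ i, f i = ∑ i : (sᶜ : Finset ι), f i := by
  rw [← sum_add_sum_compl s f, sum_eq_zero hf, zero_add, sum_coe_sort]

namespace Matrix

local notation "ι[" s "]" => (Subtype.val : ↥s → _)

variable {n : Type*} [DecidableEq n]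

theorem IsHermitian.trace_cfc [Fintype n] {𝕜 : Type*} [RCLike 𝕜] {A : Matrix n n 𝕜}
    (hA : A.IsHermitian) (f : ℝ → ℝ) : (cfc f A).trace = ∑ i, (f (hA.eigenvalues i) : 𝕜) := by
  rw [hA.cfc_eq, IsHermitian.cfc, Unitary.conjStarAlgAut_apply, trace_mul_comm, ← mul_assoc,
    Unitary.star_mul_self_of_mem hA.eigenvectorUnitary.2, one_mul, trace_diagonal]
  rfl

open scoped MatrixOrder in
theorem PosSemidef.nuclearNorm_eq_trace [Fintype n] {M : Matrix n n ℝ} (hM : M.PosSemidef) :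
    nuclearNorm M = M.trace := by
  have hMM : (Mᴴ * M).PosSemidef := posSemidef_conjTranspose_mul_self M
  calc nuclearNorm M = (cfc Real.sqrt (Mᴴ * M)).trace :=
        ((isHermitian_conjTranspose_mul_self M).trace_cfc _).symm
    _ = M.trace := by
        rw [← cfcₙ_eq_cfc, ← CFC.sqrt_eq_real_sqrt _ hMM.nonneg, hM.1,
          CFC.sqrt_mul_self M hM.nonneg]

noncomputable def nystromResidual {𝕜 : Type*} [Field 𝕜] (K : Matrix n n 𝕜) (s : Finset n) :
    Matrix n n 𝕜 :=
  K - K.submatrix id ι[s] * (K.submatrix ι[s] ι[s])⁻¹ * K.submatrix ι[s] id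

variable (s : Finset n)

section Compl

variable [Fintype n] {α : Type*}

theorem trace_eq_trace_submatrix_compl [AddCommMonoid α] {M : Matrix n n α}
    (hM : M.submatrix ι[s] id = 0) : M.trace = (M.submatrix ι[sᶜ] ι[sᶜ]).trace :=
  s.sum_eq_sum_compl_of_eq_zero fun i hi => congrFun₂ hM ⟨i, hi⟩ i

theorem mul_eq_mul_submatrix_compl [NonUnitalNonAssocSemiring α] {l m : Type*}
    (A : Matrix l n α) {M : Matrix n m α} (hM : M.submatrix ι[s] id = 0) :
    A * M = A.submatrix id ι[sᶜ] * M.submatrix ι[sᶜ] id := by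
  ext i j
  exact s.sum_eq_sum_compl_of_eq_zero fun k hk =>
    mul_eq_zero_of_right _ (congrFun₂ hM ⟨k, hk⟩ j)

theorem one_submatrix_compl [Zero α] [One α] : (1 : Matrix n n α).submatrix ι[sᶜ] ι[s] = 0 := by
  ext ⟨i, hi⟩ ⟨j, hj⟩
  simp [one_apply_ne (ne_of_mem_of_not_mem hj (Finset.mem_compl.1 hi)).symm]

end Compl

section Field

variable {𝕜 : Type*} [Field 𝕜]

theorem nystromResidual_submatrix_val_id_eq_zero {K : Matrix n n 𝕜}
    (hS : IsUnit (K.submatrix ι[s] ι[s]).det) : (nystromResidual K s).submatrix ι[s] id = 0 := by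
  have hrows : (K.submatrix id ι[s] * (K.submatrix ι[s] ι[s])⁻¹ * K.submatrix ι[s] id).submatrix
      ι[s] id = K.submatrix ι[s] id := by
    rw [submatrix_mul _ _ _ id _ Function.bijective_id,
      submatrix_mul _ _ _ id _ Function.bijective_id, submatrix_submatrix, Function.comp_id,
      Function.id_comp, submatrix_id_id, submatrix_id_id, mul_nonsing_inv _ hS, Matrix.one_mul]
  exact sub_eq_zero.2 hrows.symm

theorem inv_submatrix_compl_eq_nystromResidual [Fintype n] {L : Matrix n n 𝕜} (hL : IsUnit L.det)
    (hS : IsUnit (L⁻¹.submatrix ι[s] ι[s]).det) :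
    (L.submatrix ι[sᶜ] ι[sᶜ])⁻¹ = (nystromResidual L⁻¹ s).submatrix ι[sᶜ] ι[sᶜ] := by
  have hLE : L * nystromResidual L⁻¹ s =
      1 - (1 : Matrix n n 𝕜).submatrix id ι[s] * (L⁻¹.submatrix ι[s] ι[s])⁻¹ *
        L⁻¹.submatrix ι[s] id := by
    have hLK : L * L⁻¹.submatrix id ι[s] = (1 : Matrix n n 𝕜).submatrix id ι[s] :=
      congrArg (·.submatrix id ι[s]) (mul_nonsing_inv L hL)
    rw [nystromResidual, Matrix.mul_sub, ← Matrix.mul_assoc, ← Matrix.mul_assoc,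
      mul_nonsing_inv _ hL, hLK]
  refine inv_eq_right_inv ?_
  calc _ = (L * nystromResidual L⁻¹ s).submatrix ι[sᶜ] ι[sᶜ] := by
        rw [mul_eq_mul_submatrix_compl s L (nystromResidual_submatrix_val_id_eq_zero s hS),
          submatrix_mul _ _ _ id _ Function.bijective_id]
        rfl
    _ = 1 := by
        have hP : ((1 : Matrix n n 𝕜).submatrix id ι[s] * (L⁻¹.submatrix ι[s] ι[s])⁻¹ *
            L⁻¹.submatrix ι[s] id).submatrix ι[sᶜ] ι[sᶜ] = 0 := by
          rw [submatrix_mul _ _ _ id _ Function.bijective_id,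
            submatrix_mul _ _ _ id _ Function.bijective_id]
          simp only [submatrix_submatrix, Function.comp_id, Function.id_comp,
            one_submatrix_compl, Matrix.zero_mul]
        rw [hLE]
        exact (sub_eq_self.2 hP).trans (submatrix_one _ Subtype.val_injective)

end Field

theorem PosDef.posSemidef_nystromResidual [Fintype n] {𝕜 : Type*} [Field 𝕜] [PartialOrder 𝕜]
    [StarRing 𝕜] [StarOrderedRing 𝕜] {K : Matrix n n 𝕜} (hK : K.PosDef) :
    (nystromResidual K s).PosSemidef := by
  have hS : (K.submatrix ι[s] ι[s]).PosDef := hK.submatrix Subtype.val_injective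
  let := hS.isUnit.invertible
  have hblocks : fromBlocks (K.submatrix ι[s] ι[s]) (K.submatrix ι[s] id)
      (K.submatrix ι[s] id)ᴴ K = K.submatrix (Sum.elim ι[s] id) (Sum.elim ι[s] id) := by
    rw [conjTranspose_submatrix, hK.1]
    ext (i | i) (j | j) <;> rfl
  have := (PosDef.fromBlocks₁₁ _ K hS).1 (hblocks ▸ hK.posSemidef.submatrix _)
  rwa [conjTranspose_submatrix, hK.1] at this

end Matrix

/-- **Nuclear Nyström error via Schur complement.**
Let `L` be symmetric positive definite with `K := L⁻¹`, and let `s`, `sᶜ` partition the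
indices.  Then the nuclear norm of the Nyström error equals the trace of the inverse of the
complementary principal block of `L`:
`‖K - K_{:,s} (K_{s,s})⁻¹ K_{s,:}‖_* = Tr[(L_{sᶜ,sᶜ})⁻¹]`. -/
theorem nuclearNorm_nystrom_error_eq_trace {n : ℕ} (L : Matrix (Fin n) (Fin n) ℝ)
    (hL : L.PosDef) (s : Finset (Fin n)) :
    letI K := L⁻¹
    nuclearNorm
        (K - K.submatrix id (Subtype.val : s → Fin n) *
          (K.submatrix (Subtype.val : s → Fin n) (Subtype.val : s → Fin n))⁻¹ *
          K.submatrix (Subtype.val : s → Fin n) id) =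
      Matrix.trace
        ((L.submatrix (Subtype.val : (sᶜ : Finset (Fin n)) → Fin n)
          (Subtype.val : (sᶜ : Finset (Fin n)) → Fin n))⁻¹) := by
  have hK : L⁻¹.PosDef := hL.inv
  have hS : IsUnit (L⁻¹.submatrix (Subtype.val : s → Fin n) Subtype.val).det :=
    (hK.submatrix Subtype.val_injective).det_pos.ne'.isUnit
  rw [inv_submatrix_compl_eq_nystromResidual s hL.det_pos.ne'.isUnit hS,
    ← trace_eq_trace_submatrix_compl s (nystromResidual_submatrix_val_id_eq_zero s hS)]
  exact (hK.posSemidef_nystromResidual s).nuclearNorm_eq_trace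
end

section
/- Suppose A is a k×k real matrix whose eigenvalues all have strictly positive real part, and U is an n×k real matrix with orthonormal columns. Then for any closed contour C in the open right half-plane enclosing all eigenvalues of A^{-1}, one has U e^{-A} U^T = (2πi)^{-1} ∮_C e^{-1/z} (zI - U A^{-1} U^T)^{-1} dz. -/
open Matrix

attribute [local instance] Matrix.normedAddCommGroup Matrix.normedSpace

/-!
Put `B = A⁻¹`. Because `Uᵀ U = 1`, for `z ≠ 0` the resolvent splits as
`(z - U B Uᵀ)⁻¹ = U (z - B)⁻¹ Uᵀ + z⁻¹ (1 - U Uᵀ)`, and the second part integrates to zero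
against `exp (-z⁻¹)` because `0` lies outside the disc. For the first part expand
`exp (-z⁻¹) = ∑ (-1)ᵐ z⁻ᵐ / m!`, uniformly on the circle. The identity
`z⁻¹ (z - B)⁻¹ = (z - B)⁻¹ B⁻¹ - z⁻¹ B⁻¹` reduces `∮ z⁻ᵐ (z - B)⁻¹ dz = 2πi B⁻ᵐ` to `m = 0`, and
`∮ (z - B)⁻¹ dz = 2πi` follows by pushing the circle to infinity, where
`(z - B)⁻¹ = (z - c)⁻¹ (1 + o(1))`. Summing the series gives `2πi exp (-B⁻¹) = 2πi exp (-A)`.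
-/

open Metric Filter Topology Polynomial Complex
open scoped Real Nat

section CircleIntegral

variable {E F : Type*} [NormedAddCommGroup E] [NormedSpace ℂ E] [NormedAddCommGroup F]
  [NormedSpace ℂ F] {c : ℂ} {r : ℝ}

theorem ContinuousLinearMap.circleIntegral_comp_comm [CompleteSpace E] [CompleteSpace F]
    (L : E →L[ℂ] F) {f : ℂ → E} (hf : CircleIntegrable f c r) :
    (∮ z in C(c, r), L (f z)) = L (∮ z in C(c, r), f z) := by
  simp only [circleIntegral, ← L.intervalIntegral_comp_comm hf.out, L.map_smul]

theorem circleIntegral.hasSum_of_norm_le {f : ℕ → ℂ → E} {g : ℂ → E} {bound : ℕ → ℝ}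
    (hr : 0 ≤ r) (hf : ∀ n, CircleIntegrable (f n) c r)
    (hbound : ∀ n, ∀ z ∈ sphere c r, ‖f n z‖ ≤ bound n) (hsum : Summable bound)
    (hg : ∀ z ∈ sphere c r, HasSum (fun n => f n z) (g z)) :
    HasSum (fun n => ∮ z in C(c, r), f n z) (∮ z in C(c, r), g z) := by
  refine intervalIntegral.hasSum_integral_of_dominated_convergence (fun n _ => r * bound n)
    (fun n => (hf n).out.def'.1) (fun n => MeasureTheory.ae_of_all _ fun θ _ => ?_)
    (MeasureTheory.ae_of_all _ fun _ _ => hsum.mul_left r) intervalIntegrable_const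
    (MeasureTheory.ae_of_all _ fun θ _ => (hg _ (circleMap_mem_sphere c hr θ)).const_smul _)
  rw [norm_smul, deriv_circleMap, norm_mul, norm_circleMap_zero, norm_I, mul_one,
    abs_of_nonneg hr]
  exact mul_le_mul_of_nonneg_left (hbound n _ (circleMap_mem_sphere c hr θ)) hr

theorem hasSum_circleIntegral_exp_neg_inv_smul [CompleteSpace E] {g : ℂ → E} (hr : 0 ≤ r)
    (h0 : sphere c r ⊆ {0}ᶜ) (hg : ContinuousOn g (sphere c r)) :
    HasSum (fun m => ((-1) ^ m / m ! : ℂ) • ∮ z in C(c, r), z⁻¹ ^ m • g z)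
      (∮ z in C(c, r), exp (-z⁻¹) • g z) := by
  have hinv : ContinuousOn (fun z : ℂ => z⁻¹) (sphere c r) := continuousOn_inv₀.mono h0
  obtain ⟨M, hM⟩ := (isCompact_sphere c r).exists_bound_of_continuousOn hinv
  obtain ⟨C, hC⟩ := (isCompact_sphere c r).exists_bound_of_continuousOn hg
  simp only [← circleIntegral.integral_smul]
  refine circleIntegral.hasSum_of_norm_le hr (fun m => ?_) (fun m z hz => ?_)
    ((Real.summable_pow_div_factorial M).mul_right C) (fun z _ => ?_)
  · exact (continuousOn_const.smul ((hinv.pow m).smul hg)).circleIntegrable hr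
  · calc ‖((-1) ^ m / m ! : ℂ) • z⁻¹ ^ m • g z‖ = ‖z⁻¹‖ ^ m / m ! * ‖g z‖ := by
          rw [norm_smul, norm_smul, norm_div, norm_pow, norm_neg, norm_one, one_pow, norm_pow,
            norm_natCast]
          ring
      _ ≤ M ^ m / m ! * C := by
          have hM₀ : 0 ≤ M := (norm_nonneg _).trans (hM z hz)
          gcongr
          exacts [hM z hz, hC z hz]
  · have := (NormedSpace.exp_series_hasSum_exp' (𝕂 := ℂ) (-z⁻¹)).smul_const (g z)
    rw [← exp_eq_exp_ℂ] at this
    convert this using 2 with m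
    rw [smul_smul, smul_eq_mul, neg_pow z⁻¹, div_eq_inv_mul, mul_assoc]

end CircleIntegral

theorem Metric.sphere_subset_compl_of_subset_ball {α : Type*} [PseudoMetricSpace α] {c : α}
    {r : ℝ} {s : Set α} (h : s ⊆ ball c r) : sphere c r ⊆ sᶜ :=
  (sphere_disjoint_ball.mono_right h).subset_compl_right

theorem zero_notMem_closedBall_of_forall_mem_sphere_re_pos {c : ℂ} {r : ℝ} (hr : 0 ≤ r)
    (h : ∀ z ∈ sphere c r, 0 < z.re) : (0 : ℂ) ∉ closedBall c r := by
  have hc : r < c.re := by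
    simpa using h (c - r) (by simp [abs_of_nonneg hr])
  intro h0
  rw [mem_closedBall, dist_comm, dist_zero_right] at h0
  linarith [re_le_norm c]

namespace Matrix

variable {ι : Type*} [Fintype ι] [DecidableEq ι]

section Field

variable {K : Type*} [Field K]

theorem inv_map {L : Type*} [Field L] (f : K →+* L) (M : Matrix ι ι K) :
    (M⁻¹).map f = (M.map f)⁻¹ := by
  have hdet := f.map_det M
  have hadj := f.map_adjugate M
  simp only [RingHom.mapMatrix_apply] at hdet hadj
  rw [inv_def, inv_def, ← hdet, ← hadj, Ring.inverse_eq_inv', Ring.inverse_eq_inv', ← map_inv₀ f]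
  ext i j
  simp

theorem inv_smul_of_ne_zero (M : Matrix ι ι K) {a : K} (ha : a ≠ 0) : (a • M)⁻¹ = a⁻¹ • M⁻¹ := by
  by_cases hM : IsUnit M.det
  · exact inv_smul' M (Units.mk0 a ha) hM
  · have haM : ¬IsUnit (a • M).det := by simpa [det_smul, ha] using hM
    rw [nonsing_inv_apply_not_isUnit _ hM, nonsing_inv_apply_not_isUnit _ haM, smul_zero]

theorem isUnit_smul_one_sub_of_notMem_spectrum {B : Matrix ι ι K} {z : K}
    (hz : z ∉ spectrum K B) : IsUnit (z • (1 : Matrix ι ι K) - B) := by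
  simpa [Algebra.algebraMap_eq_smul_one] using spectrum.notMem_iff.1 hz

theorem inv_smul_one_sub_eq_charpoly_adjugate (B : Matrix ι ι K) (z : K) :
    (z • (1 : Matrix ι ι K) - B)⁻¹ =
      (B.charpoly.eval z)⁻¹ • (charmatrix B).adjugate.map (eval z) := by
  have hcharmatrix : (charmatrix B).map (eval z) = z • (1 : Matrix ι ι K) - B := by
    ext i j
    rcases eq_or_ne i j with rfl | h <;> simp [*]
  have hdet := (evalRingHom z).map_det (charmatrix B)
  have hadj := (evalRingHom z).map_adjugate (charmatrix B)
  simp only [RingHom.mapMatrix_apply, coe_evalRingHom, hcharmatrix] at hdet hadj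
  rw [inv_def, Ring.inverse_eq_inv', ← hadj, charpoly, hdet]

theorem inv_smul_one_sub_eq_inv_sub_smul {B : Matrix ι ι K} {z : K}
    (hzB : IsUnit (z • (1 : Matrix ι ι K) - B)) {c : K} (hzc : z ≠ c) :
    (z • (1 : Matrix ι ι K) - B)⁻¹ =
      (z - c)⁻¹ • 1 + (z - c)⁻¹ • ((z • 1 - B)⁻¹ * (B - c • 1)) := by
  rw [← smul_add, eq_inv_smul_iff₀ (sub_ne_zero.2 hzc)]
  calc (z - c) • (z • (1 : Matrix ι ι K) - B)⁻¹ = (z • 1 - B)⁻¹ * ((z • 1 - B) + (B - c • 1)) := by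
        rw [sub_add_sub_cancel, ← sub_smul, Matrix.mul_smul, Matrix.mul_one]
    _ = 1 + (z • 1 - B)⁻¹ * (B - c • 1) := by
        rw [Matrix.mul_add, nonsing_inv_mul _ ((isUnit_iff_isUnit_det _).1 hzB)]

theorem inv_smul_inv_smul_one_sub {B : Matrix ι ι K} {z : K} (hz : z ≠ 0)
    (hzB : IsUnit (z • (1 : Matrix ι ι K) - B)) (hB : IsUnit B) :
    z⁻¹ • (z • (1 : Matrix ι ι K) - B)⁻¹ = (z • 1 - B)⁻¹ * B⁻¹ - z⁻¹ • B⁻¹ := by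
  have hRB : (z • 1 - B)⁻¹ * B = z • (z • 1 - B)⁻¹ - 1 := by
    have hR := nonsing_inv_mul _ ((isUnit_iff_isUnit_det _).1 hzB)
    rw [Matrix.mul_sub, Matrix.mul_smul, Matrix.mul_one] at hR
    rw [← sub_sub_cancel (z • (z • 1 - B)⁻¹) ((z • 1 - B)⁻¹ * B), hR]
  calc z⁻¹ • (z • (1 : Matrix ι ι K) - B)⁻¹ = z⁻¹ • ((z • 1 - B)⁻¹ * B * B⁻¹) := by
        rw [Matrix.mul_assoc, mul_nonsing_inv _ ((isUnit_iff_isUnit_det _).1 hB), Matrix.mul_one]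
    _ = (z • 1 - B)⁻¹ * B⁻¹ - z⁻¹ • B⁻¹ := by
        rw [hRB, Matrix.sub_mul, smul_sub, Matrix.smul_mul, smul_smul, inv_mul_cancel₀ hz,
          one_smul, Matrix.one_mul]

theorem inv_smul_one_sub_mul_mul {κ : Type*} [Fintype κ] [DecidableEq κ]
    {U : Matrix κ ι K} {V : Matrix ι κ K} (hVU : V * U = 1) {B : Matrix ι ι K} {z : K}
    (hz : z ≠ 0) (hzB : IsUnit (z • (1 : Matrix ι ι K) - B)) :
    (z • (1 : Matrix κ κ K) - U * B * V)⁻¹ = U * (z • 1 - B)⁻¹ * V + z⁻¹ • (1 - U * V) := by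
  have hVU' : ∀ X : Matrix ι κ K, V * (U * X) = X := fun X => by
    rw [← Matrix.mul_assoc, hVU, Matrix.one_mul]
  have h₁ : (z • 1 - U * B * V) * (U * (z • 1 - B)⁻¹ * V) = U * V := by
    calc _ = U * ((z • 1 - B) * (z • 1 - B)⁻¹) * V := by
          simp only [Matrix.sub_mul, Matrix.mul_sub, Matrix.smul_mul, Matrix.mul_smul,
            Matrix.one_mul, Matrix.mul_assoc, hVU']
      _ = U * V := by rw [mul_nonsing_inv _ ((isUnit_iff_isUnit_det _).1 hzB), Matrix.mul_one]
  have h₂ : (z • 1 - U * B * V) * (z⁻¹ • (1 - U * V)) = 1 - U * V := by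
    simp only [Matrix.mul_smul, Matrix.sub_mul, Matrix.mul_sub, Matrix.smul_mul, Matrix.one_mul,
      Matrix.mul_one, Matrix.mul_assoc, hVU']
    rw [sub_sub_sub_cancel_right, ← smul_sub, smul_smul, inv_mul_cancel₀ hz, one_smul]
  exact inv_eq_right_inv (by rw [Matrix.mul_add, h₁, h₂, add_sub_cancel])

end Field

theorem exp_map_ofReal (M : Matrix ι ι ℝ) :
    (NormedSpace.exp M).map ofReal = NormedSpace.exp (M.map ofReal) := by
  -- `NormedSpace.exp` only sees the topology; the operator norm supplies the `NormedRing`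
  -- structure that `map_exp` asks for.
  open scoped Norms.Operator in
  exact NormedSpace.map_exp ofRealHom.mapMatrix (continuous_id.matrix_map continuous_ofReal) M

theorem circleIntegral_mul_mul {l m n p : Type*} [Fintype l] [Fintype m] [Fintype n] [Fintype p]
    {c : ℂ} {r : ℝ} (U : Matrix l m ℂ) (V : Matrix n p ℂ) {f : ℂ → Matrix m n ℂ}
    (hf : CircleIntegrable f c r) :
    (∮ z in C(c, r), U * f z * V) = U * (∮ z in C(c, r), f z) * V :=
  LinearMap.toContinuousLinearMap
    ((mulRightLinearMap l ℂ V).comp (mulLeftLinearMap n ℂ U)) |>.circleIntegral_comp_comm hf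

theorem differentiableAt_inv_smul_one_sub (B : Matrix ι ι ℂ) {z : ℂ} (hz : z ∉ spectrum ℂ B) :
    DifferentiableAt ℂ (fun w : ℂ => (w • (1 : Matrix ι ι ℂ) - B)⁻¹) z := by
  have hdet : B.charpoly.eval z ≠ 0 := by
    rw [eval_charpoly, scalar_apply, ← smul_one_eq_diagonal]
    exact ((isUnit_iff_isUnit_det _).1 (isUnit_smul_one_sub_of_notMem_spectrum hz)).ne_zero
  simp only [inv_smul_one_sub_eq_charpoly_adjugate]
  exact (B.charpoly.differentiableAt.inv hdet).smul <| differentiableAt_pi.2 fun i =>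
    differentiableAt_pi.2 fun j => ((charmatrix B).adjugate i j).differentiableAt

theorem continuousOn_inv_smul_one_sub (B : Matrix ι ι ℂ) :
    ContinuousOn (fun z : ℂ => (z • (1 : Matrix ι ι ℂ) - B)⁻¹) (spectrum ℂ B)ᶜ := fun _ hz =>
  (differentiableAt_inv_smul_one_sub B hz).continuousAt.continuousWithinAt

theorem tendsto_inv_smul_one_sub_cobounded (B : Matrix ι ι ℂ) :
    Tendsto (fun z : ℂ => (z • (1 : Matrix ι ι ℂ) - B)⁻¹) (Bornology.cobounded ℂ) (𝓝 0) := by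
  have hinv : ContinuousAt Inv.inv (1 : Matrix ι ι ℂ) := continuousAt_matrix_inv _ (by simp)
  have hsub : Tendsto (fun w : ℂ => 1 - w • B) (𝓝 0) (𝓝 1) := by
    simpa using ((tendsto_id (x := 𝓝 (0 : ℂ))).smul_const B).const_sub (1 : Matrix ι ι ℂ)
  have hlim : Tendsto (fun w : ℂ => w • (1 - w • B)⁻¹) (𝓝 0) (𝓝 0) := by
    simpa using (tendsto_id (x := 𝓝 (0 : ℂ))).smul (hinv.tendsto.comp hsub)
  refine (hlim.comp tendsto_inv₀_cobounded).congr' ?_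
  filter_upwards [Bornology.eventually_ne_cobounded 0] with z hz
  rw [Function.comp_apply, ← inv_smul_of_ne_zero _ hz, smul_sub, smul_smul, mul_inv_cancel₀ hz,
    one_smul]

theorem circleIntegral_inv_smul_one_sub_sub {B : Matrix ι ι ℂ} {c : ℂ} {ρ : ℝ} (hρ : 0 < ρ)
    (hB : sphere c ρ ⊆ (spectrum ℂ B)ᶜ) :
    (∮ z in C(c, ρ), (z • (1 : Matrix ι ι ℂ) - B)⁻¹) - (2 * π * I : ℂ) • 1 =
      ∮ z in C(c, ρ), (z - c)⁻¹ • ((z • (1 : Matrix ι ι ℂ) - B)⁻¹ * (B - c • 1)) := by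
  have hzc : ∀ z ∈ sphere c ρ, z ≠ c := fun z hz => ne_of_mem_sphere hz hρ.ne'
  have hinv : ContinuousOn (fun z : ℂ => (z - c)⁻¹) (sphere c ρ) :=
    (continuousOn_id.sub continuousOn_const).inv₀ fun z hz => sub_ne_zero.2 (hzc z hz)
  have hR := (continuousOn_inv_smul_one_sub B).mono hB
  rw [circleIntegral.integral_congr hρ.le fun z hz => inv_smul_one_sub_eq_inv_sub_smul
      (isUnit_smul_one_sub_of_notMem_spectrum (hB hz)) (hzc z hz),
    circleIntegral.integral_add (f := fun z => (z - c)⁻¹ • (1 : Matrix ι ι ℂ))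
      (g := fun z => (z - c)⁻¹ • ((z • (1 : Matrix ι ι ℂ) - B)⁻¹ * (B - c • 1)))
      ((hinv.smul continuousOn_const).circleIntegrable hρ.le)
      ((hinv.smul (hR.mul continuousOn_const)).circleIntegrable hρ.le),
    circleIntegral.integral_smul_const, circleIntegral.integral_sub_center_inv c hρ.ne',
    add_sub_cancel_left]

theorem circleIntegral_inv_smul_one_sub (B : Matrix ι ι ℂ) {c : ℂ} {r : ℝ} (hr : 0 < r)
    (hB : spectrum ℂ B ⊆ ball c r) :
    (∮ z in C(c, r), (z • (1 : Matrix ι ι ℂ) - B)⁻¹) = (2 * π * I : ℂ) • 1 := by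
  have hdiff : ∀ z ∉ ball c r, DifferentiableAt ℂ (fun w : ℂ => (w • (1 : Matrix ι ι ℂ) - B)⁻¹) z :=
    fun z hz => differentiableAt_inv_smul_one_sub B fun h => hz (hB h)
  have hdecay : Tendsto (fun z : ℂ => (z • (1 : Matrix ι ι ℂ) - B)⁻¹ * (B - c • 1))
      (Bornology.cobounded ℂ) (𝓝 0) := by
    simpa using (tendsto_inv_smul_one_sub_cobounded B).mul_const (B - c • 1)
  refine eq_of_forall_dist_le fun ε hε => ?_
  obtain ⟨ρ₀, -, hρ₀⟩ := (hasBasis_cobounded_compl_closedBall c).tendsto_left_iff.1 hdecay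
    (closedBall 0 (ε / (2 * π))) (closedBall_mem_nhds _ (by positivity))
  set ρ := max r (ρ₀ + 1)
  have hρ : 0 < ρ := hr.trans_le (le_max_left _ _)
  have hsphere : ∀ z ∈ sphere c ρ, z ∉ ball c r ∧ z ∉ closedBall c ρ₀ := fun z hz => by
    rw [mem_sphere] at hz
    rw [mem_ball, mem_closedBall, hz, not_lt, not_le]
    exact ⟨le_max_left _ _, (lt_add_one ρ₀).trans_le (le_max_right _ _)⟩
  calc dist (∮ z in C(c, r), (z • (1 : Matrix ι ι ℂ) - B)⁻¹) ((2 * π * I : ℂ) • 1)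
      = ‖∮ z in C(c, ρ), (z - c)⁻¹ • ((z • (1 : Matrix ι ι ℂ) - B)⁻¹ * (B - c • 1))‖ := by
        rw [← circleIntegral_eq_of_differentiable_on_annulus_off_countable hr (le_max_left _ _)
            Set.countable_empty (fun z hz => (hdiff z hz.2).continuousAt.continuousWithinAt)
            fun z hz => hdiff z fun h => hz.1.2 (ball_subset_closedBall h),
          dist_eq_norm, circleIntegral_inv_smul_one_sub_sub hρ fun z hz h =>
            (hsphere z hz).1 (hB h)]
    _ ≤ 2 * π * ρ * (ρ⁻¹ * (ε / (2 * π))) := by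
        refine circleIntegral.norm_integral_le_of_norm_le_const hρ.le fun z hz => ?_
        rw [norm_smul, norm_inv, ← dist_eq_norm, mem_sphere.1 hz]
        gcongr
        simpa using hρ₀ (hsphere z hz).2
    _ = ε := by field_simp

theorem circleIntegral_inv_pow_smul_inv_smul_one_sub (B : Matrix ι ι ℂ) {c : ℂ} {r : ℝ}
    (hr : 0 < r) (hB : spectrum ℂ B ⊆ ball c r) (h0 : (0 : ℂ) ∉ closedBall c r) (m : ℕ) :
    (∮ z in C(c, r), z⁻¹ ^ m • (z • (1 : Matrix ι ι ℂ) - B)⁻¹) = (2 * π * I : ℂ) • B⁻¹ ^ m := by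
  have hout : sphere c r ⊆ (spectrum ℂ B)ᶜ := sphere_subset_compl_of_subset_ball hB
  have hne : sphere c r ⊆ {0}ᶜ := fun z hz (h : z = 0) => h0 (h ▸ sphere_subset_closedBall hz)
  have hpow : ∀ j, ContinuousOn (fun z : ℂ => z⁻¹ ^ j) (sphere c r) := fun j =>
    (continuousOn_inv₀.mono hne).pow j
  have hvanish : ∀ j, (∮ z in C(c, r), z⁻¹ ^ (j + 1)) = 0 := fun j =>
    (((differentiableOn_inv (𝕜 := ℂ)).pow (j + 1)).diffContOnCl_ball
      fun z hz (h : z = 0) => h0 (h ▸ hz)).circleIntegral_eq_zero hr.le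
  have hBunit : IsUnit B :=
    spectrum.isUnit_of_zero_notMem ℂ fun h => h0 (ball_subset_closedBall (hB h))
  induction m with
  | zero => simpa using circleIntegral_inv_smul_one_sub B hr hB
  | succ m ih =>
    have hcont : ContinuousOn (fun z : ℂ => z⁻¹ ^ m • (z • (1 : Matrix ι ι ℂ) - B)⁻¹)
        (sphere c r) := (hpow m).smul ((continuousOn_inv_smul_one_sub B).mono hout)
    calc (∮ z in C(c, r), z⁻¹ ^ (m + 1) • (z • (1 : Matrix ι ι ℂ) - B)⁻¹)
        = ∮ z in C(c, r), 1 * (z⁻¹ ^ m • (z • (1 : Matrix ι ι ℂ) - B)⁻¹) * B⁻¹ -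
            z⁻¹ ^ (m + 1) • B⁻¹ := by
          refine circleIntegral.integral_congr hr.le fun z hz => ?_
          simp only [pow_succ, mul_smul, inv_smul_inv_smul_one_sub (hne hz)
            (isUnit_smul_one_sub_of_notMem_spectrum (hout hz)) hBunit, smul_sub, smul_mul_assoc,
            Matrix.one_mul]
      _ = 1 * (∮ z in C(c, r), z⁻¹ ^ m • (z • (1 : Matrix ι ι ℂ) - B)⁻¹) * B⁻¹ -
            (∮ z in C(c, r), z⁻¹ ^ (m + 1)) • B⁻¹ := by
          rw [circleIntegral.integral_sub
              (f := fun z => 1 * (z⁻¹ ^ m • (z • (1 : Matrix ι ι ℂ) - B)⁻¹) * B⁻¹)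
              (g := fun z => z⁻¹ ^ (m + 1) • B⁻¹)
              (((continuousOn_const.mul hcont).mul continuousOn_const).circleIntegrable hr.le)
              (((hpow (m + 1)).smul continuousOn_const).circleIntegrable hr.le),
            circleIntegral_mul_mul _ _ (hcont.circleIntegrable hr.le),
            circleIntegral.integral_smul_const]
      _ = (2 * π * I : ℂ) • B⁻¹ ^ (m + 1) := by
          rw [ih, hvanish, zero_smul, sub_zero, Matrix.one_mul, smul_mul_assoc, pow_succ]

theorem circleIntegral_exp_neg_inv_smul_inv_smul_one_sub (B : Matrix ι ι ℂ) {c : ℂ} {r : ℝ}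
    (hr : 0 < r) (hB : spectrum ℂ B ⊆ ball c r) (h0 : (0 : ℂ) ∉ closedBall c r) :
    (∮ z in C(c, r), exp (-z⁻¹) • (z • (1 : Matrix ι ι ℂ) - B)⁻¹) =
      (2 * π * I : ℂ) • NormedSpace.exp (-B⁻¹) := by
  have hseries := hasSum_circleIntegral_exp_neg_inv_smul hr.le
    (fun z hz (h : z = 0) => h0 (h ▸ sphere_subset_closedBall hz))
    ((continuousOn_inv_smul_one_sub B).mono (sphere_subset_compl_of_subset_ball hB))
  have hterm : ∀ m : ℕ, (2 * π * I : ℂ)⁻¹ • ((-1) ^ m / m ! : ℂ) •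
      (∮ z in C(c, r), z⁻¹ ^ m • (z • (1 : Matrix ι ι ℂ) - B)⁻¹) = (m ! : ℂ)⁻¹ • (-B⁻¹) ^ m := by
    intro m
    rw [circleIntegral_inv_pow_smul_inv_smul_one_sub B hr hB h0, ← neg_one_smul ℂ B⁻¹,
      _root_.smul_pow, smul_smul, smul_smul, smul_smul]
    congr 1
    field_simp
  have hexp : NormedSpace.exp (-B⁻¹) =
      (2 * π * I : ℂ)⁻¹ • ∮ z in C(c, r), exp (-z⁻¹) • (z • (1 : Matrix ι ι ℂ) - B)⁻¹ := by
    have := (hseries.const_smul (2 * π * I : ℂ)⁻¹).tsum_eq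
    simp only [hterm] at this
    rw [NormedSpace.exp_eq_tsum ℂ]
    exact this
  rw [hexp, smul_smul, mul_inv_cancel₀ two_pi_I_ne_zero, one_smul]

theorem circleIntegral_exp_neg_inv_smul_inv_smul_one_sub_mul_mul {κ : Type*} [Fintype κ]
    [DecidableEq κ] {U : Matrix κ ι ℂ} {V : Matrix ι κ ℂ} (hVU : V * U = 1) (B : Matrix ι ι ℂ)
    {c : ℂ} {r : ℝ} (hr : 0 < r) (hB : spectrum ℂ B ⊆ ball c r) (h0 : (0 : ℂ) ∉ closedBall c r) :
    (∮ z in C(c, r), exp (-z⁻¹) • (z • (1 : Matrix κ κ ℂ) - U * B * V)⁻¹) =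
      (2 * π * I : ℂ) • (U * NormedSpace.exp (-B⁻¹) * V) := by
  have hout : sphere c r ⊆ (spectrum ℂ B)ᶜ := sphere_subset_compl_of_subset_ball hB
  have hne : sphere c r ⊆ {0}ᶜ := fun z hz (h : z = 0) => h0 (h ▸ sphere_subset_closedBall hz)
  have hexp : ContinuousOn (fun z : ℂ => exp (-z⁻¹)) (sphere c r) :=
    ((continuousOn_inv₀.mono hne).neg).cexp
  have hR : ContinuousOn (fun z : ℂ => exp (-z⁻¹) • (z • (1 : Matrix ι ι ℂ) - B)⁻¹)
      (sphere c r) := hexp.smul ((continuousOn_inv_smul_one_sub B).mono hout)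
  have hvanish : (∮ z in C(c, r), exp (-z⁻¹) * z⁻¹) = 0 :=
    ((((differentiableOn_inv (𝕜 := ℂ)).neg).cexp.mul differentiableOn_inv).diffContOnCl_ball
      fun z hz (h : z = 0) => h0 (h ▸ hz)).circleIntegral_eq_zero hr.le
  calc (∮ z in C(c, r), exp (-z⁻¹) • (z • (1 : Matrix κ κ ℂ) - U * B * V)⁻¹)
      = ∮ z in C(c, r), U * (exp (-z⁻¹) • (z • (1 : Matrix ι ι ℂ) - B)⁻¹) * V +
          (exp (-z⁻¹) * z⁻¹) • (1 - U * V) := by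
        refine circleIntegral.integral_congr hr.le fun z hz => ?_
        rw [inv_smul_one_sub_mul_mul hVU (hne hz)
            (isUnit_smul_one_sub_of_notMem_spectrum (hout hz)), smul_add, Matrix.mul_smul,
          Matrix.smul_mul, smul_smul]
    _ = U * (∮ z in C(c, r), exp (-z⁻¹) • (z • (1 : Matrix ι ι ℂ) - B)⁻¹) * V +
          (∮ z in C(c, r), exp (-z⁻¹) * z⁻¹) • (1 - U * V) := by
        rw [circleIntegral.integral_add
            (f := fun z => U * (exp (-z⁻¹) • (z • (1 : Matrix ι ι ℂ) - B)⁻¹) * V)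
            (g := fun z => (exp (-z⁻¹) * z⁻¹) • (1 - U * V))
            ((((continuous_const.matrix_mul continuous_id).matrix_mul continuous_const
              ).comp_continuousOn hR).circleIntegrable hr.le)
            (((hexp.mul (continuousOn_inv₀.mono hne)).smul continuousOn_const).circleIntegrable
              hr.le),
          circleIntegral.integral_smul_const,
          circleIntegral_mul_mul _ _ (hR.circleIntegrable hr.le)]
    _ = (2 * π * I : ℂ) • (U * NormedSpace.exp (-B⁻¹) * V) := by
        rw [circleIntegral_exp_neg_inv_smul_inv_smul_one_sub B hr hB h0, hvanish, zero_smul,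
          add_zero, Matrix.mul_smul, Matrix.smul_mul]

end Matrix

theorem contour_integral_identity_general {n k : ℕ}
    (A : Matrix (Fin k) (Fin k) ℝ) (U : Matrix (Fin n) (Fin k) ℝ)
    (hU : Uᵀ * U = 1)
    (c : ℂ) (r : ℝ) (hr : 0 < r)
    (hhalf : ∀ z ∈ Metric.sphere c r, 0 < z.re)
    (hspec : spectrum ℂ ((A.map Complex.ofReal)⁻¹) ⊆ Metric.ball c r) :
    (U * NormedSpace.exp (-A) * Uᵀ).map Complex.ofReal =
      (2 * (Real.pi : ℂ) * Complex.I)⁻¹ •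
        ∮ z in C(c, r),
          Complex.exp (-z⁻¹) •
            (z • (1 : Matrix (Fin n) (Fin n) ℂ) -
              (U * A⁻¹ * Uᵀ).map Complex.ofReal)⁻¹ := by
  have h0 := zero_notMem_closedBall_of_forall_mem_sphere_re_pos hr.le hhalf
  have hA : IsUnit (A.map ofReal).det := by
    rw [← isUnit_nonsing_inv_det_iff, ← isUnit_iff_isUnit_det]
    exact spectrum.isUnit_of_zero_notMem ℂ fun h => h0 (ball_subset_closedBall (hspec h))
  have hmap : ∀ {l m p : ℕ} (X : Matrix (Fin l) (Fin m) ℝ) (Y : Matrix (Fin m) (Fin p) ℝ),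
      (X * Y).map ofReal = X.map ofReal * Y.map ofReal := fun _ _ => Matrix.map_mul (f := ofRealHom)
  have hUc : (U.map ofReal)ᵀ * U.map ofReal = 1 := by
    rw [← transpose_map, ← hmap, hU, Matrix.map_one _ ofReal_zero ofReal_one]
  have hinv : (A⁻¹).map ofReal = (A.map ofReal)⁻¹ := inv_map ofRealHom A
  rw [hmap, hmap, hmap, hmap, exp_map_ofReal, transpose_map, Matrix.map_neg _ ofReal_neg, hinv,
    circleIntegral_exp_neg_inv_smul_inv_smul_one_sub_mul_mul hUc _ hr hspec h0,
    nonsing_inv_nonsing_inv _ hA, smul_smul, inv_mul_cancel₀ two_pi_I_ne_zero, one_smul]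

/-- **Contour integral identity, Lemma `contour0`.**
Suppose `A` is a `k × k` real matrix whose eigenvalues all have strictly positive real part,
and `U` is an `n × k` real matrix with orthonormal columns.  Then for any (circular) closed
contour `C(c,r)` lying in the open right half-plane and enclosing all eigenvalues of `A⁻¹`,
`U e^{-A} Uᵀ = (2πi)⁻¹ ∮_{C(c,r)} e^{-1/z} (z I - U A⁻¹ Uᵀ)⁻¹ dz`. -/
theorem contour_integral_identity {n k : ℕ}
    (A : Matrix (Fin k) (Fin k) ℝ) (U : Matrix (Fin n) (Fin k) ℝ)
    (hA : ∀ μ ∈ spectrum ℂ (A.map Complex.ofReal), 0 < μ.re)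
    (hU : Uᵀ * U = 1)
    (c : ℂ) (r : ℝ) (hr : 0 < r)
    (hhalf : ∀ z ∈ Metric.sphere c r, 0 < z.re)
    (hspec : spectrum ℂ ((A.map Complex.ofReal)⁻¹) ⊆ Metric.ball c r) :
    (U * NormedSpace.exp (-A) * Uᵀ).map Complex.ofReal =
      (2 * (Real.pi : ℂ) * Complex.I)⁻¹ •
        ∮ z in C(c, r),
          Complex.exp (-z⁻¹) •
            (z • (1 : Matrix (Fin n) (Fin n) ℂ) -
              (U * A⁻¹ * Uᵀ).map Complex.ofReal)⁻¹ :=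
  contour_integral_identity_general A U hU c r hr hhalf hspec
end

section
/- Let L be a symmetric positive semidefinite n×n matrix with kernel spanned by a unit vector h, and let V be an n×k matrix with orthonormal columns such that h lies in the column span of V. Then V^T (hh^T) V is the orthogonal projector onto the kernel of V^T L V, and (V^T L V)^+ = (V^T L V + γ V^T hh^T V)^{-1} - γ^{-1} V^T hh^T V for every γ > 0. -/
/-!
Write `h = V y`. Orthonormality of the columns gives `y ⬝ᵥ y = 1` and `P = y yᵀ`, and since
`L` is positive semidefinite, `Vᵀ L V x = 0` iff `L (V x) = 0`, so `ker S = span y` is exactly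
the fixed space of the projector `P`. Then `S P = P S = 0` and `S + P` is invertible, and
`(S + P)⁻¹ - P` satisfies `S M = M S = 1 - P`, which gives the Penrose conditions; a direct
product computation gives `(S + γ P)⁻¹ = (S + P)⁻¹ + (γ⁻¹ - 1) P`.
-/

open Matrix

namespace Matrix

def IsMoorePenroseInverse {m n K : Type*} [Fintype m] [Fintype n] [Field K]
    (A : Matrix m n K) (M : Matrix n m K) : Prop :=
  A * M * A = A ∧ M * A * M = M ∧ (A * M)ᵀ = A * M ∧ (M * A)ᵀ = M * A

section RankOne

variable {m n R : Type*} [Fintype n] [CommRing R]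

theorem transpose_mul_vecMulVec_mul (A : Matrix n m R) (u v : n → R) (B : Matrix n m R) :
    Aᵀ * vecMulVec u v * B = vecMulVec (Aᵀ *ᵥ u) (Bᵀ *ᵥ v) := by
  rw [mul_vecMulVec, vecMulVec_mul, ← mulVec_transpose]

theorem vecMulVec_self_mul_self {u : n → R} (hu : u ⬝ᵥ u = 1) :
    vecMulVec u u * vecMulVec u u = vecMulVec u u := by
  rw [vecMulVec_mul_vecMulVec, hu, one_smul]

theorem vecMulVec_self_mulVec_eq_self_iff {u : n → R} (hu : u ⬝ᵥ u = 1) (x : n → R) :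
    vecMulVec u u *ᵥ x = x ↔ ∃ c : R, x = c • u := by
  rw [vecMulVec_mulVec, op_smul_eq_smul]
  constructor
  · exact fun hx => ⟨u ⬝ᵥ x, hx.symm⟩
  · rintro ⟨c, rfl⟩
    rw [dotProduct_smul, hu, smul_eq_mul, mul_one]

end RankOne

open scoped ComplexOrder in
theorem PosSemidef.conjTranspose_mul_mul_same_mulVec_eq_zero_iff {m n 𝕜 : Type*} [Fintype m]
    [Fintype n] [RCLike 𝕜] {A : Matrix n n 𝕜} (hA : A.PosSemidef) (B : Matrix n m 𝕜)
    (x : m → 𝕜) : (Bᴴ * A * B) *ᵥ x = 0 ↔ A *ᵥ (B *ᵥ x) = 0 := by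
  rw [← (hA.conjTranspose_mul_mul_same B).dotProduct_mulVec_zero_iff,
    ← hA.dotProduct_mulVec_zero_iff, ← mulVec_mulVec, ← mulVec_mulVec, dotProduct_mulVec,
    vecMul_conjTranspose, star_star]

theorem PosSemidef.transpose_mul_mul_mulVec_eq_zero_iff_exists_smul {m n : Type*} [Fintype m]
    [Fintype n] [DecidableEq n] {L : Matrix m m ℝ} (hL : L.PosSemidef) {V : Matrix m n ℝ}
    (hV : Vᵀ * V = 1) {y : n → ℝ} (hker : L *ᵥ (V *ᵥ y) = 0)
    (hker1 : ∀ x, L *ᵥ x = 0 → ∃ c : ℝ, x = c • (V *ᵥ y)) (x : n → ℝ) :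
    (Vᵀ * L * V) *ᵥ x = 0 ↔ ∃ c : ℝ, x = c • y := by
  have hVV (z : n → ℝ) : Vᵀ *ᵥ (V *ᵥ z) = z := by rw [mulVec_mulVec, hV, one_mulVec]
  rw [← conjTranspose_eq_transpose_of_trivial, hL.conjTranspose_mul_mul_same_mulVec_eq_zero_iff]
  constructor
  · intro hx
    obtain ⟨c, hc⟩ := hker1 _ hx
    exact ⟨c, by rw [← hVV x, hc, mulVec_smul, hVV]⟩
  · rintro ⟨c, rfl⟩
    rw [mulVec_smul, mulVec_smul, hker, smul_zero]

section ComplementaryProjector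

variable {ι K : Type*} [Fintype ι] [Field K] {S P : Matrix ι ι K}

theorem mul_eq_zero_of_ker_eq_fixedPoints (hPP : P * P = P)
    (hker : ∀ x, S *ᵥ x = 0 ↔ P *ᵥ x = x) : S * P = 0 := by
  refine ext_iff_mulVec.2 fun x => ?_
  rw [← mulVec_mulVec, zero_mulVec, hker, mulVec_mulVec, hPP]

variable [DecidableEq ι]

theorem isUnit_det_add_of_ker_le_fixedPoints (hPS : P * S = 0) (hPP : P * P = P)
    (hker : ∀ x, S *ᵥ x = 0 → P *ᵥ x = x) : IsUnit (S + P).det := by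
  rw [← isUnit_iff_isUnit_det, ← mulVec_injective_iff_isUnit]
  refine (injective_iff_map_eq_zero (S + P).mulVecLin).2 fun x hx => ?_
  rw [mulVecLin_apply, add_mulVec] at hx
  have hPx : P *ᵥ x = 0 :=
    calc P *ᵥ x = P *ᵥ (S *ᵥ x + P *ᵥ x) := by
          rw [mulVec_add, mulVec_mulVec, mulVec_mulVec, hPS, hPP, zero_mulVec, zero_add]
      _ = 0 := by rw [hx, mulVec_zero]
  rw [← hker x (by rwa [hPx, add_zero] at hx), hPx]

theorem inv_add_mul_self (hSP : S * P = 0) (hPP : P * P = P) (hA : IsUnit (S + P).det) :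
    (S + P)⁻¹ * P = P :=
  calc (S + P)⁻¹ * P = (S + P)⁻¹ * ((S + P) * P) := by rw [add_mul, hSP, hPP, zero_add]
    _ = P := nonsing_inv_mul_cancel_left _ _ hA

theorem mul_inv_add_self (hPS : P * S = 0) (hPP : P * P = P) (hA : IsUnit (S + P).det) :
    P * (S + P)⁻¹ = P :=
  calc P * (S + P)⁻¹ = P * (S + P) * (S + P)⁻¹ := by rw [mul_add, hPS, hPP, zero_add]
    _ = P := mul_nonsing_inv_cancel_right _ _ hA

theorem mul_inv_add (hPS : P * S = 0) (hPP : P * P = P) (hA : IsUnit (S + P).det) :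
    S * (S + P)⁻¹ = 1 - P :=
  calc S * (S + P)⁻¹ = (S + P) * (S + P)⁻¹ - P * (S + P)⁻¹ := by
        rw [add_mul, add_sub_cancel_right]
    _ = 1 - P := by rw [mul_nonsing_inv _ hA, mul_inv_add_self hPS hPP hA]

theorem inv_add_mul (hSP : S * P = 0) (hPP : P * P = P) (hA : IsUnit (S + P).det) :
    (S + P)⁻¹ * S = 1 - P :=
  calc (S + P)⁻¹ * S = (S + P)⁻¹ * (S + P) - (S + P)⁻¹ * P := by
        rw [mul_add, add_sub_cancel_right]
    _ = 1 - P := by rw [nonsing_inv_mul _ hA, inv_add_mul_self hSP hPP hA]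

theorem isMoorePenroseInverse_inv_add_sub (hSP : S * P = 0) (hPS : P * S = 0)
    (hPP : P * P = P) (hPt : Pᵀ = P) (hA : IsUnit (S + P).det) :
    IsMoorePenroseInverse S ((S + P)⁻¹ - P) := by
  have hSM : S * ((S + P)⁻¹ - P) = 1 - P := by
    rw [mul_sub, mul_inv_add hPS hPP hA, hSP, sub_zero]
  have hMS : ((S + P)⁻¹ - P) * S = 1 - P := by
    rw [sub_mul, inv_add_mul hSP hPP hA, hPS, sub_zero]
  refine ⟨?_, ?_, ?_, ?_⟩
  · rw [hSM, sub_mul, one_mul, hPS, sub_zero]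
  · rw [hMS, sub_mul, one_mul, mul_sub, mul_inv_add_self hPS hPP hA, hPP, sub_self, sub_zero]
  · rw [hSM, transpose_sub, transpose_one, hPt]
  · rw [hMS, transpose_sub, transpose_one, hPt]

theorem inv_add_smul (hSP : S * P = 0) (hPS : P * S = 0) (hPP : P * P = P)
    (hA : IsUnit (S + P).det) {γ : K} (hγ : γ ≠ 0) :
    (S + γ • P)⁻¹ = (S + P)⁻¹ + (γ⁻¹ - 1) • P := by
  refine inv_eq_right_inv ?_
  rw [add_mul, mul_add, mul_add, mul_inv_add hPS hPP hA, mul_smul_comm, hSP, smul_zero,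
    add_zero, smul_mul_assoc, mul_inv_add_self hPS hPP hA, smul_mul_assoc, mul_smul_comm, hPP,
    smul_smul, mul_sub, mul_inv_cancel₀ hγ, mul_one, sub_smul, one_smul]
  abel

end ComplementaryProjector

end Matrix

/-- **Pseudoinverse of the projected Laplacian.**
Let `L` be symmetric positive semidefinite with kernel spanned by a unit vector `h`, and let
`V` have orthonormal columns with `h` in their span.  Then `P := Vᵀ (h hᵀ) V` is the
orthogonal projector onto the kernel of `S := Vᵀ L V`, and the Moore–Penrose pseudoinverse
`M = S⁺` (characterized by the four Penrose conditions) satisfies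
`M = (S + γ P)⁻¹ - γ⁻¹ P` for every `γ > 0`. -/
theorem projected_laplacian_pseudoinverse {n k : ℕ}
    (L : Matrix (Fin n) (Fin n) ℝ) (h : Fin n → ℝ) (V : Matrix (Fin n) (Fin k) ℝ)
    (hL : L.PosSemidef)
    (hker : L *ᵥ h = 0)
    (hunit : ∑ i, (h i) ^ 2 = 1)
    (hker1 : ∀ x, L *ᵥ x = 0 → ∃ c : ℝ, x = c • h)
    (hV : Vᵀ * V = 1)
    (hspan : ∃ y : Fin k → ℝ, V *ᵥ y = h) :
    letI P : Matrix (Fin k) (Fin k) ℝ := Vᵀ * Matrix.vecMulVec h h * V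
    letI S : Matrix (Fin k) (Fin k) ℝ := Vᵀ * L * V
    (P * P = P ∧ Pᵀ = P ∧ ∀ x : Fin k → ℝ, S *ᵥ x = 0 ↔ P *ᵥ x = x) ∧
      ∃ M : Matrix (Fin k) (Fin k) ℝ,
        S * M * S = S ∧ M * S * M = M ∧ (S * M)ᵀ = S * M ∧ (M * S)ᵀ = M * S ∧
        ∀ γ : ℝ, 0 < γ → M = (S + γ • P)⁻¹ - γ⁻¹ • P := by
  obtain ⟨y, rfl⟩ := hspan
  have hVV (x : Fin k → ℝ) : Vᵀ *ᵥ (V *ᵥ x) = x := by rw [mulVec_mulVec, hV, one_mulVec]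
  have hyy : y ⬝ᵥ y = 1 := by
    have : (V *ᵥ y) ⬝ᵥ (V *ᵥ y) = 1 := by simpa [dotProduct, sq] using hunit
    rwa [dotProduct_mulVec, ← mulVec_transpose, hVV] at this
  have hSt : (Vᵀ * L * V)ᵀ = Vᵀ * L * V := by
    simpa using (hL.conjTranspose_mul_mul_same V).isHermitian.eq
  have hkerS (x : Fin k → ℝ) : (Vᵀ * L * V) *ᵥ x = 0 ↔ vecMulVec y y *ᵥ x = x := by
    rw [vecMulVec_self_mulVec_eq_self_iff hyy]
    exact hL.transpose_mul_mul_mulVec_eq_zero_iff_exists_smul hV hker hker1 x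
  have hPP := vecMulVec_self_mul_self hyy
  have hPt := transpose_vecMulVec y y
  have hSP := mul_eq_zero_of_ker_eq_fixedPoints hPP hkerS
  have hPS : vecMulVec y y * (Vᵀ * L * V) = 0 := by
    rw [← hPt, ← hSt, ← transpose_mul, hSP, transpose_zero]
  have hA := isUnit_det_add_of_ker_le_fixedPoints hPS hPP fun x => (hkerS x).1
  obtain ⟨h₁, h₂, h₃, h₄⟩ := isMoorePenroseInverse_inv_add_sub hSP hPS hPP hPt hA
  rw [transpose_mul_vecMulVec_mul, hVV]
  refine ⟨⟨hPP, hPt, hkerS⟩, _, h₁, h₂, h₃, h₄, fun γ hγ => ?_⟩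
  rw [inv_add_smul hSP hPS hPP hA hγ.ne']
  module
end
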